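/- arXiv:2402.16259 — 15 statements merged into one kernel-verified Lean document; each statement's English description precedes it below -/
import Mathlib

section
/- Let S be a finite set, ψ: S → Γ a function to an abelian group Γ, and F ⊆ Γ a finite set of labels with 0 ∉ F and |F| ≤ |S| - 1. Then there exists a nonempty subset S' ⊆ S such that the sum of ψ over S' is not in F. -/
/-!
If every nonempty subset sum of `S` lies in `F` and `0 ∉ F`, then no nonempty subset of `S`
sums to zero, so a proper subset never has the same sum as the whole set. Adding the elements
of `S` one at a time therefore produces a new sum at each step, giving at least `|S|` distinct
elements of `F`.
-/

namespace Finset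

variable {α Γ : Type*} [AddCommGroup Γ]

theorem sum_ne_sum_of_ssubset_of_zeroSumFree {S T : Finset α} {ψ : α → Γ}
    (hfree : ∀ U ⊆ S, U.Nonempty → ∑ x ∈ U, ψ x ≠ 0) (hT : T ⊂ S) :
    ∑ x ∈ T, ψ x ≠ ∑ x ∈ S, ψ x := by
  classical
  intro heq
  have hdiff : ∑ x ∈ S \ T, ψ x + ∑ x ∈ T, ψ x = ∑ x ∈ S, ψ x := sum_sdiff hT.subset
  refine hfree (S \ T) sdiff_subset (sdiff_nonempty.mpr hT.not_subset) ?_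
  rwa [heq, add_eq_right] at hdiff

theorem card_le_card_of_forall_sum_mem {S : Finset α} {ψ : α → Γ} {F : Finset Γ}
    (h0 : (0 : Γ) ∉ F)
    (hF : ∀ T ⊆ S, T.Nonempty → ∑ x ∈ T, ψ x ∈ F) : S.card ≤ F.card := by
  classical
  induction S using Finset.induction_on generalizing F with
  | empty => simp
  | insert a S ha ih =>
    set s := ∑ x ∈ insert a S, ψ x
    have hs : s ∈ F := hF _ subset_rfl (insert_nonempty a S)
    have hfree : ∀ U ⊆ insert a S, U.Nonempty → ∑ x ∈ U, ψ x ≠ 0 :=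
      fun U hU hne hzero => h0 (hzero ▸ hF U hU hne)
    have hS : S.card ≤ (F.erase s).card := by
      refine ih (fun h => h0 (mem_of_mem_erase h)) fun T hT hne => mem_erase.mpr ⟨?_, ?_⟩
      · exact sum_ne_sum_of_ssubset_of_zeroSumFree hfree
          (ssubset_of_subset_of_ssubset hT (ssubset_insert ha))
      · exact hF T (hT.trans (subset_insert a S)) hne
    rw [card_erase_of_mem hs] at hS
    rw [card_insert_of_notMem ha]
    have := card_pos.mpr ⟨s, hs⟩
    omega

end Finset

/-- For a finite set `S`, a labeling `ψ : S → Γ` to an abelian group, and a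
finite set `F ⊆ Γ` of labels with `0 ∉ F` and `|F| ≤ |S| - 1`, there is a nonempty
subset `S' ⊆ S` with `ψ(S') ∉ F`. -/
theorem stmt_0 {α Γ : Type*} [AddCommGroup Γ]
    (S : Finset α) (hS : S.Nonempty) (ψ : α → Γ)
    (F : Finset Γ) (h0 : (0 : Γ) ∉ F) (hF : F.card ≤ S.card - 1) :
    ∃ S' : Finset α, S' ⊆ S ∧ S'.Nonempty ∧ (∑ x ∈ S', ψ x) ∉ F := by
  by_contra! hall
  have hcard : S.card ≤ F.card := Finset.card_le_card_of_forall_sum_mem h0 hall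
  have := hS.card_pos
  omega
end

section
/- Let M be a matroid, ψ: E(M) → Γ a labeling to an abelian group, and w: E(M) → ℝ a weight function. If M has at least one basis B' with ψ(B') ≠ 0, then for any basis B minimizing w among all bases, there exists a basis B* with ψ(B*) ≠ 0, minimizing w among all bases with non-zero label, such that |B \ B*| ≤ 1. -/
/-! Among the minimum-weight bases with non-zero label, take one, `Bs`, minimising `|B \ Bs|`.
If `|B \ Bs| ≥ 2`, a symmetric exchange between `B` and `Bs` produces a minimum-weight non-zero
basis missing either just one element of `B`, or one element fewer of `B` than `Bs` does. -/

open Set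

namespace Matroid

variable {α : Type*} {M : Matroid α} {B B' : Set α} {x : α}

/-- The element `y` lies in the fundamental circuit of `x` in `B'` and in the fundamental cocircuit
`M.E \ M.closure (B \ {x})` of `x` in `B`; a circuit and a cocircuit never meet in exactly `x`. -/
lemma IsBase.exists_symm_exchange (hB : M.IsBase B) (hB' : M.IsBase B') (hx : x ∈ B \ B') :
    ∃ y ∈ B' \ B, M.IsBase (insert y (B \ {x})) ∧ M.IsBase (insert x (B' \ {y})) := by
  have hxE : x ∈ M.E := hB.subset_ground hx.1
  have hC := hB'.fundCircuit_isCircuit hxE hx.2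
  have hK := hB.compl_closure_sdiff_singleton_isCocircuit hx.1
  have hxK : x ∈ M.E \ M.closure (B \ {x}) := ⟨hxE, hB.indep.notMem_closure_sdiff_of_mem hx.1⟩
  obtain ⟨y, ⟨hyC, hyE, hycl⟩, hyx⟩ : ∃ y ∈ M.fundCircuit x B' ∩ (M.E \ M.closure (B \ {x})),
      y ≠ x := by
    by_contra! h
    exact hC.inter_isCocircuit_ne_singleton hK
      (eq_singleton_iff_unique_mem.2 ⟨⟨M.mem_fundCircuit x B', hxK⟩, h⟩)
  have hyB' : y ∈ B' := (mem_insert_iff.1 (M.fundCircuit_subset_insert x B' hyC)).resolve_left hyx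
  have hyB : y ∉ B := fun hyB ↦
    hycl (M.subset_closure _ (sdiff_subset.trans hB.subset_ground) ⟨hyB, hyx⟩)
  have hindep : M.Indep (insert x B' \ {y}) :=
    (hB'.indep.mem_fundCircuit_iff (by rw [hB'.closure_eq]; exact hxE) hx.2).1 hyC
  refine ⟨y, ⟨hyB', hyB⟩, hB.exchange_base_of_notMem_closure hx.1 hycl, ?_⟩
  rw [insert_sdiff_singleton_comm hyx.symm]
  exact hB'.exchange_isBase_of_indep' hyB' hx.2 hindep

end Matroid

lemma finsum_mem_insert_sdiff_singleton {α G : Type*} [AddCommGroup G] (f : α → G) {B : Set α}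
    (hB : B.Finite) {x y : α} (hx : x ∈ B) (hy : y ∉ B) :
    ∑ᶠ e ∈ insert y (B \ {x}), f e = ∑ᶠ e ∈ B, f e + f y - f x := by
  rw [finsum_mem_insert f (fun h ↦ hy h.1) hB.sdiff,
    ← finsum_mem_add_sdiff (singleton_subset_iff.2 hx) hB, finsum_mem_singleton]
  abel

section LabelledBases

variable {α Γ : Type*} [AddCommGroup Γ] {M : Matroid α} {ψ : α → Γ} {w : α → ℝ} {B Bs : Set α}
  {x : α}

/-- Exchanging `x ∈ B \ Bs` symmetrically gives `B₁ = B - x + y` and `B₂ = Bs - y + x` with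
`w B₁ + w B₂ = w B + w Bs` and `ψ B₁ + ψ B₂ = ψ B + ψ Bs = ψ Bs`. So one of them is non-zero, and
since `w B ≤ w B₁` and `w B ≤ w B₂`, whichever it is weighs at most `w Bs`. -/
lemma exists_nonzero_isBase_exchange [M.RankFinite] (hB : M.IsBase B)
    (hmin : ∀ B', M.IsBase B' → ∑ᶠ e ∈ B, w e ≤ ∑ᶠ e ∈ B', w e) (hψB : ∑ᶠ e ∈ B, ψ e = 0)
    (hBs : M.IsBase Bs) (hψBs : ∑ᶠ e ∈ Bs, ψ e ≠ 0) (hx : x ∈ B \ Bs) :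
    ∃ B'', M.IsBase B'' ∧ ∑ᶠ e ∈ B'', ψ e ≠ 0 ∧ ∑ᶠ e ∈ B'', w e ≤ ∑ᶠ e ∈ Bs, w e ∧
      (B \ B'' ⊆ {x} ∨ B \ B'' ⊆ (B \ Bs) \ {x}) := by
  obtain ⟨y, ⟨hyBs, hyB⟩, hB₁, hB₂⟩ := hB.exists_symm_exchange hBs hx
  have hw₁ := finsum_mem_insert_sdiff_singleton w hB.finite hx.1 hyB
  have hw₂ := finsum_mem_insert_sdiff_singleton w hBs.finite hyBs hx.2
  have hψ₁ := finsum_mem_insert_sdiff_singleton ψ hB.finite hx.1 hyB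
  have hψ₂ := finsum_mem_insert_sdiff_singleton ψ hBs.finite hyBs hx.2
  have hle₁ := hmin _ hB₁
  have hle₂ := hmin _ hB₂
  have hψsum : ∑ᶠ e ∈ insert y (B \ {x}), ψ e + ∑ᶠ e ∈ insert x (Bs \ {y}), ψ e =
      ∑ᶠ e ∈ Bs, ψ e := by
    rw [hψ₁, hψ₂, hψB]
    abel
  by_cases hψ₂0 : ∑ᶠ e ∈ insert x (Bs \ {y}), ψ e = 0
  · rw [hψ₂0, add_zero] at hψsum
    refine ⟨_, hB₁, hψsum ▸ hψBs, by linarith, Or.inl ?_⟩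
    intro e ⟨heB, he⟩
    by_contra hne
    exact he (mem_insert_of_mem _ ⟨heB, hne⟩)
  · refine ⟨_, hB₂, hψ₂0, by linarith, Or.inr ?_⟩
    intro e ⟨heB, he⟩
    simp only [mem_insert_iff, mem_sdiff, mem_singleton_iff, not_or, not_and, not_not] at he
    exact ⟨⟨heB, fun heBs ↦ hyB (he.2 heBs ▸ heB)⟩, he.1⟩

end LabelledBases

lemma exists_nonzero_isBase_lex_min {α Γ : Type*} [AddCommGroup Γ] (M : Matroid α) [M.Finite]
    (ψ : α → Γ) (w : α → ℝ) (hex : ∃ B', M.IsBase B' ∧ ∑ᶠ e ∈ B', ψ e ≠ 0) (B : Set α) :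
    ∃ Bs, M.IsBase Bs ∧ ∑ᶠ e ∈ Bs, ψ e ≠ 0 ∧
      ∀ B', M.IsBase B' → ∑ᶠ e ∈ B', ψ e ≠ 0 →
        ∑ᶠ e ∈ Bs, w e < ∑ᶠ e ∈ B', w e ∨
          ∑ᶠ e ∈ Bs, w e = ∑ᶠ e ∈ B', w e ∧ (B \ Bs).ncard ≤ (B \ B').ncard := by
  have hfin : {B' | M.IsBase B' ∧ ∑ᶠ e ∈ B', ψ e ≠ 0}.Finite :=
    M.ground_finite.finite_subsets.subset fun B' hB' ↦ hB'.1.subset_ground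
  obtain ⟨Bs, ⟨hBs, hψBs⟩, hlex⟩ := Set.exists_min_image _
    (fun B' ↦ toLex (∑ᶠ e ∈ B', w e, (B \ B').ncard)) hfin hex
  exact ⟨Bs, hBs, hψBs, fun B' hB' hψB' ↦ Prod.Lex.toLex_le_toLex.1 (hlex B' ⟨hB', hψB'⟩)⟩

/-- If a matroid `M` has a basis with non-zero label, then for any
minimum-weight basis `B` there is a minimum-weight non-zero basis `B*` with `|B \ B*| ≤ 1`. -/
theorem stmt_1 {α Γ : Type*} [AddCommGroup Γ] (M : Matroid α) [M.Finite]
    (ψ : α → Γ) (w : α → ℝ)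
    (hex : ∃ B', M.IsBase B' ∧ (∑ᶠ e ∈ B', ψ e) ≠ 0)
    (B : Set α) (hB : M.IsBase B)
    (hmin : ∀ B', M.IsBase B' → (∑ᶠ e ∈ B, w e) ≤ ∑ᶠ e ∈ B', w e) :
    ∃ Bstar : Set α, M.IsBase Bstar ∧ (∑ᶠ e ∈ Bstar, ψ e) ≠ 0 ∧
      (∀ B', M.IsBase B' → (∑ᶠ e ∈ B', ψ e) ≠ 0 →
        (∑ᶠ e ∈ Bstar, w e) ≤ ∑ᶠ e ∈ B', w e) ∧
      (B \ Bstar).ncard ≤ 1 := by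
  obtain hψB | hψB := ne_or_eq (∑ᶠ e ∈ B, ψ e) 0
  · exact ⟨B, hB, hψB, fun B' hB' _ ↦ hmin B' hB', by simp⟩
  obtain ⟨Bs, hBs, hψBs, hlex⟩ := exists_nonzero_isBase_lex_min M ψ w hex B
  refine ⟨Bs, hBs, hψBs, fun B' hB' hψB' ↦ (hlex B' hB' hψB').elim le_of_lt (·.1.le), ?_⟩
  by_contra! hcard
  obtain ⟨x, hx⟩ : (B \ Bs).Nonempty := nonempty_of_ncard_ne_zero (by omega)
  obtain ⟨B'', hB'', hψB'', hwB'', hsub⟩ :=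
    exists_nonzero_isBase_exchange hB hmin hψB hBs hψBs hx
  have hcard'' := (hlex B'' hB'' hψB'').resolve_left hwB''.not_gt |>.2
  have hfin : (B \ Bs).Finite := hB.finite.sdiff
  rcases hsub with hsub | hsub
  · have hle := ncard_le_ncard hsub
    rw [ncard_singleton] at hle
    omega
  · have hle := ncard_le_ncard hsub hfin.sdiff
    rw [ncard_sdiff_singleton_of_mem hx] at hle
    omega
end

section
/- Let M be a matroid and ψ: E(M) → Γ a labeling to a linearly ordered abelian group, and let B be a basis. Then there exists a sequence of bases B₀, B₁, …, B_ℓ such that B₀ = B, B_ℓ has minimum label ψ among all bases, and for all i ∈ [ℓ], ψ(B_i) < ψ(B_{i-1}) and |B_i \ B_{i-1}| = 1. -/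
/-!
A base `B` that is not of minimum label can be improved by a single exchange. Take a cheaper
base `B'` with `|B' \ B|` minimal and `x ∈ B \ B'`; symmetric exchange yields `y ∈ B' \ B` such
that both `B - x + y` and `B' - y + x` are bases. If `ψ x ≤ ψ y`, then `B' - y + x` would be a
cheaper base closer to `B`, so `ψ y < ψ x` and `B - x + y` is the improvement. Strictly
label-decreasing exchanges cannot go on forever among the finitely many bases, so iterating
them from `B` ends at a minimum-label base.
-/

open Set

theorem finsum_mem_insert_sdiff_singleton_add {α M : Type*} [AddCommMonoid M] (f : α → M)
    {s : Set α} {a b : α} (hs : s.Finite) (ha : a ∈ s) (hb : b ∉ s) :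
    ∑ᶠ e ∈ insert b s \ {a}, f e + f a = ∑ᶠ e ∈ s, f e + f b := by
  have hba : b ≠ a := ne_of_mem_of_not_mem ha hb |>.symm
  rw [← insert_sdiff_singleton_comm hba, finsum_mem_insert f (fun h => hb h.1) hs.sdiff,
    ← finsum_mem_add_sdiff (singleton_subset_iff.2 ha) hs, finsum_mem_singleton]
  abel

namespace Matroid

variable {α : Type*} {M : Matroid α} {B B₁ B₂ : Set α} {x : α}

theorem IsBase.exists_symm_exchange_s4 (hB₁ : M.IsBase B₁) (hB₂ : M.IsBase B₂) (hx : x ∈ B₁ \ B₂) :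
    ∃ y ∈ B₂ \ B₁, M.IsBase (insert y B₁ \ {x}) ∧ M.IsBase (insert x B₂ \ {y}) := by
  have hxE : x ∈ M.E := hB₁.subset_ground hx.1
  -- A circuit never meets a cocircuit in exactly one element.
  obtain ⟨y, ⟨hyC, hyK⟩, hyx⟩ := ((hB₂.fundCircuit_isCircuit hxE hx.2).isCocircuit_inter_nontrivial
    (fundCocircuit_isCocircuit hx.1 hB₁) ⟨x, mem_fundCircuit .., mem_fundCocircuit ..⟩).exists_ne x
  have hyB₂ : y ∈ B₂ := by simpa [hyx] using M.fundCircuit_subset_insert x B₂ hyC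
  have hyB₁ : y ∉ B₁ := ((M.fundCocircuit_subset_insert_compl x B₁ hyK).resolve_left hyx).2
  have hyE : y ∈ M.E := hB₂.subset_ground hyB₂
  rw [hB₁.mem_fundCocircuit_iff_mem_fundCircuit,
    hB₁.indep.mem_fundCircuit_iff (by rwa [hB₁.closure_eq]) hyB₁] at hyK
  rw [hB₂.indep.mem_fundCircuit_iff (by rwa [hB₂.closure_eq]) hx.2] at hyC
  exact ⟨y, ⟨hyB₂, hyB₁⟩, hB₁.exchange_isBase_of_indep' hx.1 hyB₁ hyK,
    hB₂.exchange_isBase_of_indep' hyB₂ hx.2 hyC⟩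

variable {Γ : Type*} [AddCommMonoid Γ] [LinearOrder Γ] [IsOrderedCancelAddMonoid Γ]

theorem IsBase.exists_exchange_finsum_lt [M.Finite] (ψ : α → Γ) (hB : M.IsBase B)
    (hnotmin : ∃ B', M.IsBase B' ∧ ∑ᶠ e ∈ B', ψ e < ∑ᶠ e ∈ B, ψ e) :
    ∃ B₁, M.IsBase B₁ ∧ ∑ᶠ e ∈ B₁, ψ e < ∑ᶠ e ∈ B, ψ e ∧ (B₁ \ B).ncard = 1 := by
  have hBfin : B.Finite := M.set_finite B hB.subset_ground
  have hfin : {B' | M.IsBase B' ∧ ∑ᶠ e ∈ B', ψ e < ∑ᶠ e ∈ B, ψ e}.Finite :=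
    M.ground_finite.finite_subsets.subset fun _ h => h.1.subset_ground
  obtain ⟨B', ⟨hB', hB'lt⟩, hclosest⟩ := exists_min_image _ (fun B' => (B' \ B).ncard) hfin hnotmin
  obtain ⟨x, hx⟩ : (B \ B').Nonempty := by
    rw [nonempty_iff_ne_empty, Ne, sdiff_eq_empty]
    exact fun h => hB'lt.ne (by rw [hB.eq_of_subset_isBase hB' h])
  obtain ⟨y, hy, hBxy, hB'yx⟩ := hB.exists_symm_exchange_s4 hB' hx
  have hB'fin : B'.Finite := M.set_finite B' hB'.subset_ground
  have hψ : ψ y < ψ x := by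
    by_contra! hxy
    have hswap := finsum_mem_insert_sdiff_singleton_add ψ hB'fin hy.1 hx.2
    have hcloser : ((insert x B' \ {y}) \ B).ncard < (B' \ B).ncard := by
      refine ncard_lt_ncard ?_ hB'fin.sdiff
      refine ⟨fun z ⟨⟨hz, hzy⟩, hzB⟩ => ⟨hz.resolve_left (by rintro rfl; exact hzB hx.1), hzB⟩, ?_⟩
      exact fun h => (h hy).1.2 rfl
    exact hcloser.not_ge (hclosest _ ⟨hB'yx, lt_of_le_of_lt (le_of_add_le_add_right
      (hswap.trans_le (add_le_add_right hxy _))) hB'lt⟩)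
  refine ⟨insert y B \ {x}, hBxy, ?_, ?_⟩
  · have hswap := finsum_mem_insert_sdiff_singleton_add ψ hBfin hx.1 hy.2
    exact lt_of_add_lt_add_right (hswap.trans_lt (add_lt_add_right hψ _))
  · have hxy : x ∉ ({y} : Set α) := fun h : x = y => hy.2 (h ▸ hx.1)
    rw [Set.sdiff_sdiff_comm, insert_sdiff_eq_singleton hy.2, sdiff_singleton_eq_self hxy,
      ncard_singleton]

end Matroid

theorem Set.WellFoundedOn.exists_chain {β : Type*} {s : Set β} {r : β → β → Prop}
    (hs : s.WellFoundedOn r) {T : β → Prop} (hstep : ∀ b ∈ s, ¬T b → ∃ c ∈ s, r c b)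
    {b : β} (hb : b ∈ s) :
    ∃ (ℓ : ℕ) (f : ℕ → β), f 0 = b ∧ (∀ i ≤ ℓ, f i ∈ s) ∧ T (f ℓ) ∧
      ∀ i, 1 ≤ i → i ≤ ℓ → r (f i) (f (i - 1)) := by
  induction b using (wellFoundedOn_iff.1 hs).induction with
  | h b ih =>
    by_cases hT : T b
    · exact ⟨0, fun _ => b, rfl, fun _ _ => hb, hT, by omega⟩
    obtain ⟨c, hc, hcb⟩ := hstep b hb hT
    obtain ⟨ℓ, f, hf0, hfs, hfT, hfr⟩ := ih c ⟨hcb, hc, hb⟩ hc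
    refine ⟨ℓ + 1, fun | 0 => b | i + 1 => f i, rfl, ?_, hfT, ?_⟩
    · rintro (_ | i) hi
      exacts [hb, hfs i (by omega)]
    · rintro (_ | _ | i) h1 hi
      · omega
      · simpa [hf0] using hcb
      · exact hfr (i + 1) (by omega) (by omega)

/-- From any basis `B` there is a sequence of bases, each obtained from the
previous one by a single exchange and with strictly decreasing label, ending at a
minimum-label basis. -/
theorem stmt_4 {α Γ : Type*} [AddCommGroup Γ] [LinearOrder Γ] [IsOrderedAddMonoid Γ] (M : Matroid α) [M.Finite]
    (ψ : α → Γ) (B : Set α) (hB : M.IsBase B) :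
    ∃ (ℓ : ℕ) (Bs : ℕ → Set α),
      Bs 0 = B ∧ (∀ i ≤ ℓ, M.IsBase (Bs i)) ∧
      (∀ B'', M.IsBase B'' → (∑ᶠ e ∈ Bs ℓ, ψ e) ≤ ∑ᶠ e ∈ B'', ψ e) ∧
      (∀ i, 1 ≤ i → i ≤ ℓ →
        (∑ᶠ e ∈ Bs i, ψ e) < (∑ᶠ e ∈ Bs (i - 1), ψ e) ∧
        (Bs i \ Bs (i - 1)).ncard = 1) := by
  have hbases :
      {B' | M.IsBase B'}.WellFoundedOn (fun B₁ B₀ => ∑ᶠ e ∈ B₁, ψ e < ∑ᶠ e ∈ B₀, ψ e) :=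
    Set.wellFoundedOn_image.1 ((M.ground_finite.finite_subsets.subset
      fun _ h => h.subset_ground).image (fun B' => ∑ᶠ e ∈ B', ψ e)).wellFoundedOn
  refine Set.WellFoundedOn.exists_chain
    (r := fun B₁ B₀ => ∑ᶠ e ∈ B₁, ψ e < ∑ᶠ e ∈ B₀, ψ e ∧ (B₁ \ B₀).ncard = 1)
    (T := fun B₀ => ∀ B'', M.IsBase B'' → ∑ᶠ e ∈ B₀, ψ e ≤ ∑ᶠ e ∈ B'', ψ e)
    (hbases.mono' fun _ _ _ _ h => h.1) (fun B' hB' hnotmin => ?_) hB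
  push Not at hnotmin
  exact hB'.exists_exchange_finsum_lt ψ hnotmin
end

section
/- Let M be a matroid, ψ: E(M) → Γ a group labeling, F ⊆ Γ a finite set, and suppose M has an F-avoiding basis. If there exists a basis A such that |A \ A'| ≥ |F| + 1 for every F-avoiding basis A', then there also exist a basis B and an F-avoiding basis B* such that |B \ B*| = |F| + 1 and |B \ B'| ≥ |F| + 1 for every F-avoiding basis B'. -/
/-!
Only the size of `F` matters, not the group structure. Start from the far base `A` and any
`F`-avoiding base `B'`, and exchange elements of `A \ B'` for elements of `B' \ A` one at a time.
Each exchange decreases `|A \ B'|` by one and changes `|A \ A'|` by at most one for every other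
base `A'`. So either the current base stays far and we keep going until `|A \ B'| = |F| + 1`, or
the exchange first brings it closer than `|F| + 1` to some avoiding base `A''`, in which case the
base before the exchange is far and at distance exactly `|F| + 1` from `A''`.
-/

namespace Set

variable {α : Type*} {A B : Set α} {e f : α}

theorem insert_sdiff_singleton_sdiff_of_mem (hf : f ∈ A) :
    insert f (B \ {e}) \ A = (B \ A) \ {e} := by
  ext x
  by_cases hx : x = f
  · subst hx; simp [hf]
  · simp [hx, and_right_comm]

theorem ncard_sdiff_le_ncard_insert_sdiff_singleton_sdiff_add_one (hBA : (B \ A).Finite) :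
    (B \ A).ncard ≤ (insert f (B \ {e}) \ A).ncard + 1 := by
  have hsub : (B \ A) \ {e} ⊆ insert f (B \ {e}) \ A :=
    fun x ⟨⟨hxB, hxA⟩, hxe⟩ ↦ ⟨mem_insert_of_mem _ ⟨hxB, hxe⟩, hxA⟩
  have hfin : (insert f (B \ {e}) \ A).Finite :=
    (hBA.insert f).subset fun x ⟨hx, hxA⟩ ↦ by
      rcases hx with rfl | ⟨hxB, -⟩
      exacts [mem_insert _ _, mem_insert_of_mem _ ⟨hxB, hxA⟩]
  have := (pred_ncard_le_ncard_sdiff_singleton (B \ A) e).trans (ncard_le_ncard hsub hfin)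
  omega

end Set

namespace Matroid

variable {α : Type*} {M : Matroid α} {P : Set α → Prop} {k : ℕ} {B B' : Set α}

def IsFar (M : Matroid α) (P : Set α → Prop) (k : ℕ) (B : Set α) : Prop :=
  ∀ B', M.IsBase B' → P B' → k ≤ (B \ B').ncard

theorem IsBase.exists_isFar_ncard_sdiff_eq (hB : M.IsBase B) (hfar : M.IsFar P k B)
    (hB' : M.IsBase B') (hPB' : P B') :
    ∃ C C', M.IsBase C ∧ M.IsBase C' ∧ P C' ∧ (C \ C').ncard = k ∧ M.IsFar P k C := by
  obtain ⟨n, hn⟩ : ∃ n, (B \ B').ncard = n := ⟨_, rfl⟩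
  induction n generalizing B with
  | zero => exact ⟨B, B', hB, hB', hPB', by have := hfar B' hB' hPB'; omega, hfar⟩
  | succ n ih =>
    rcases (hfar B' hB' hPB').eq_or_lt with heq | hlt
    · exact ⟨B, B', hB, hB', hPB', heq.symm, hfar⟩
    obtain ⟨e, he⟩ := Set.nonempty_of_ncard_ne_zero (s := B \ B') (by omega)
    obtain ⟨f, hf, hB₁⟩ := hB.exchange hB' he
    have hn₁ : (insert f (B \ {e}) \ B').ncard = n := by
      rw [Set.insert_sdiff_singleton_sdiff_of_mem hf.1, Set.ncard_sdiff_singleton_of_mem he, hn,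
        Nat.add_sub_cancel]
    by_cases hfar₁ : M.IsFar P k (insert f (B \ {e}))
    · exact ih hB₁ hfar₁ hn₁
    obtain ⟨A, hA, hPA, hclose⟩ : ∃ A, M.IsBase A ∧ P A ∧ (insert f (B \ {e}) \ A).ncard < k := by
      simpa [IsFar] using hfar₁
    have hfarA := hfar A hA hPA
    have hfin : (B \ A).Finite := Set.finite_of_ncard_pos (by omega)
    have := Set.ncard_sdiff_le_ncard_insert_sdiff_singleton_sdiff_add_one (f := f) (e := e) hfin
    exact ⟨B, A, hB, hA, hPA, by omega, hfar⟩

end Matroid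

theorem stmt_7_general {α Γ : Type*} [AddCommGroup Γ] (M : Matroid α)
    (ψ : α → Γ) (F : Finset Γ)
    (hex : ∃ B', M.IsBase B' ∧ (∑ᶠ e ∈ B', ψ e) ∉ F)
    (A : Set α) (hA : M.IsBase A)
    (hfar : ∀ A', M.IsBase A' → (∑ᶠ e ∈ A', ψ e) ∉ F → F.card + 1 ≤ (A \ A').ncard) :
    ∃ B Bstar : Set α, M.IsBase B ∧ M.IsBase Bstar ∧ (∑ᶠ e ∈ Bstar, ψ e) ∉ F ∧
      (B \ Bstar).ncard = F.card + 1 ∧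
      (∀ B', M.IsBase B' → (∑ᶠ e ∈ B', ψ e) ∉ F → F.card + 1 ≤ (B \ B').ncard) := by
  obtain ⟨B', hB', hB'F⟩ := hex
  exact hA.exists_isFar_ncard_sdiff_eq hfar hB' hB'F

/-- If an `F`-avoiding basis exists and some basis `A` satisfies
`|A \ A'| ≥ |F| + 1` for all `F`-avoiding bases `A'`, then there are a basis `B` and an
`F`-avoiding basis `B*` with `|B \ B*| = |F| + 1` and `|B \ B'| ≥ |F| + 1` for all
`F`-avoiding bases `B'`. -/
theorem stmt_7 {α Γ : Type*} [AddCommGroup Γ] (M : Matroid α) [M.Finite]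
    (ψ : α → Γ) (F : Finset Γ)
    (hex : ∃ B', M.IsBase B' ∧ (∑ᶠ e ∈ B', ψ e) ∉ F)
    (A : Set α) (hA : M.IsBase A)
    (hfar : ∀ A', M.IsBase A' → (∑ᶠ e ∈ A', ψ e) ∉ F → F.card + 1 ≤ (A \ A').ncard) :
    ∃ B Bstar : Set α, M.IsBase B ∧ M.IsBase Bstar ∧ (∑ᶠ e ∈ Bstar, ψ e) ∉ F ∧
      (B \ Bstar).ncard = F.card + 1 ∧
      (∀ B', M.IsBase B' → (∑ᶠ e ∈ B', ψ e) ∉ F → F.card + 1 ≤ (B \ B').ncard) :=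
  stmt_7_general M ψ F hex A hA hfar
end

section
/- Let M be a matroid, ψ: E(M) → Γ a group labeling, F ⊆ Γ a finite set, and B a basis such that |B \ B̄| ≥ |F| + 1 for every F-avoiding basis B̄ of M. Let X ⊆ B, let M' = M / X be the matroid obtained by contracting X, let B' = B \ X, and let F' = {f - ψ(X) : f ∈ F}. Then |B' \ B̄'| ≥ |F| + 1 for every F'-avoiding basis B̄' of M'. -/
theorem stmt_8_general {α Γ : Type*} [AddCommGroup Γ] [DecidableEq Γ] (M : Matroid α) [M.Finite]
    (ψ : α → Γ) (F : Finset Γ) (B : Set α)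
    (hfar : ∀ Bbar, M.IsBase Bbar → (∑ᶠ e ∈ Bbar, ψ e) ∉ F → F.card + 1 ≤ (B \ Bbar).ncard)
    (X : Set α) :
    ∀ Bbar' : Set α, Disjoint Bbar' X → M.IsBase (Bbar' ∪ X) →
      (∑ᶠ e ∈ Bbar', ψ e) ∉ F.image (fun f => f - ∑ᶠ e ∈ X, ψ e) →
      F.card + 1 ≤ ((B \ X) \ Bbar').ncard := by
  intro Bbar' hdisj hbase havoid
  have hfin : (Bbar' ∪ X).Finite := hbase.finite
  have hsum : ∑ᶠ e ∈ Bbar' ∪ X, ψ e = ∑ᶠ e ∈ Bbar', ψ e + ∑ᶠ e ∈ X, ψ e :=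
    finsum_mem_union hdisj (hfin.subset Set.subset_union_left) (hfin.subset Set.subset_union_right)
  have hnot : ∑ᶠ e ∈ Bbar' ∪ X, ψ e ∉ F := fun hmem =>
    havoid (Finset.mem_image.2 ⟨_, hmem, by rw [hsum, add_sub_cancel_right]⟩)
  simpa only [Set.sdiff_sdiff, Set.union_comm] using hfar _ hbase hnot

/-- If `B` is a basis with `|B \ Bbar| ≥ |F| + 1` for every `F`-avoiding basis
`Bbar`, and `M' = M / X` is obtained by contracting `X ⊆ B` (so the bases of `M'` are the
sets `Bbar'` disjoint from `X` with `Bbar' ∪ X` a basis of `M`), then `|B' \ Bbar'| ≥ |F| + 1`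
for every `F'`-avoiding basis `Bbar'` of `M'`, where `B' = B \ X` and
`F' = {f - ψ(X) : f ∈ F}`. -/
theorem stmt_8 {α Γ : Type*} [AddCommGroup Γ] [DecidableEq Γ] (M : Matroid α) [M.Finite]
    (ψ : α → Γ) (F : Finset Γ) (B : Set α) (hB : M.IsBase B)
    (hfar : ∀ Bbar, M.IsBase Bbar → (∑ᶠ e ∈ Bbar, ψ e) ∉ F → F.card + 1 ≤ (B \ Bbar).ncard)
    (X : Set α) (hX : X ⊆ B) :
    ∀ Bbar' : Set α, Disjoint Bbar' X → M.IsBase (Bbar' ∪ X) →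
      (∑ᶠ e ∈ Bbar', ψ e) ∉ F.image (fun f => f - ∑ᶠ e ∈ X, ψ e) →
      F.card + 1 ≤ ((B \ X) \ Bbar').ncard :=
  stmt_8_general M ψ F B hfar X
end

section
/- Let M be a strongly base orderable matroid, ψ: E(M) → Γ a group labeling, and F ⊆ Γ a finite set of forbidden labels. If M has at least one F-avoiding basis, then for each basis B there exists an F-avoiding basis B* with |B \ B*| ≤ |F|. -/
/-!
Take an `F`-avoiding basis `B'` as close to `B` as possible. If `|B \ B'| > |F|`, a
strongly base orderable bijection `φ : B' \ B → B \ B'` exchanges any `W ⊆ B' \ B` into a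
basis of label `ψ(B') + ∑_{z ∈ W} (ψ(φ z) - ψ z)`. Among the `|B' \ B| > |F|` nested partial
sums some nonempty `W` must leave `F` (either a partial sum escapes `F`, or two coincide and
their difference is a zero-sum `W`), and the exchanged basis is `F`-avoiding and strictly
closer to `B`.
-/

open Set

def Matroid.StronglyBaseOrderable {α : Type*} (M : Matroid α) : Prop :=
  ∀ B₁ B₂, M.IsBase B₁ → M.IsBase B₂ → ∃ φ : α → α,
    Set.BijOn φ (B₁ \ B₂) (B₂ \ B₁) ∧
    ∀ Z ⊆ B₁ \ B₂, M.IsBase ((B₁ \ Z) ∪ φ '' Z)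

theorem Finset.exists_nonempty_add_sum_notMem_of_card_lt {ι Γ : Type*}
    [AddCancelCommMonoid Γ] (δ : ι → Γ) {F : Finset Γ} {c : Γ} (hc : c ∉ F)
    {s : Finset ι} (hs : F.card < s.card) :
    ∃ t ⊆ s, t.Nonempty ∧ c + ∑ i ∈ t, δ i ∉ F := by
  classical
  induction s using Finset.induction_on generalizing F c with
  | empty => simp at hs
  | insert a s ha ih =>
    by_cases hca : c + δ a ∈ F
    · -- restart from `c + δ a`; a zero sum on the way brings us back to `c`
      have hF : (F.erase (c + δ a)).card < s.card := by
        rw [card_erase_of_mem hca]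
        rw [card_insert_of_notMem ha] at hs
        have := card_pos.2 ⟨_, hca⟩
        omega
      obtain ⟨t, hts, htne, ht⟩ := ih (notMem_erase _ _) hF
      by_cases hzero : c + δ a + ∑ i ∈ t, δ i = c + δ a
      · refine ⟨t, hts.trans (subset_insert _ _), htne, ?_⟩
        rwa [add_eq_left.1 hzero, add_zero]
      · refine ⟨insert a t, insert_subset_insert _ hts, insert_nonempty _ _, ?_⟩
        rw [sum_insert (fun h => ha (hts h)), ← add_assoc]
        exact fun h => ht (mem_erase.2 ⟨hzero, h⟩)
    · exact ⟨{a}, by simp, singleton_nonempty _, by simpa using hca⟩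

theorem finsum_mem_sdiff_union_image {α Γ : Type*} [AddCommGroup Γ] (ψ : α → Γ)
    {φ : α → α} {s t : Set α} (hs : s.Finite) (hts : t ⊆ s) (hφ : InjOn φ t)
    (hdisj : Disjoint s (φ '' t)) :
    ∑ᶠ e ∈ (s \ t) ∪ φ '' t, ψ e = ∑ᶠ e ∈ s, ψ e + ∑ᶠ z ∈ t, (ψ (φ z) - ψ z) := by
  have ht : t.Finite := hs.subset hts
  have hsplit : ∑ᶠ e ∈ s, ψ e = ∑ᶠ e ∈ s \ t, ψ e + ∑ᶠ e ∈ t, ψ e := by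
    rw [← finsum_mem_union disjoint_sdiff_left hs.sdiff ht, sdiff_union_of_subset hts]
  rw [finsum_mem_union (hdisj.mono_left sdiff_subset) hs.sdiff (ht.image φ),
    finsum_mem_image hφ, finsum_mem_sub_distrib _ _ ht, hsplit]
  abel

theorem Set.ncard_sdiff_sdiff_union_lt {α : Type*} {s t W V : Set α} (hs : s.Finite)
    (hW : Disjoint W s) (hV : V ⊆ s \ t) (hVne : V.Nonempty) :
    (s \ (t \ W ∪ V)).ncard < (s \ t).ncard := by
  have hset : s \ (t \ W ∪ V) = (s \ t) \ V := by
    ext x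
    have := fun hxW : x ∈ W => disjoint_left.1 hW hxW
    simp only [mem_sdiff, mem_union]
    tauto
  rw [hset]
  exact ncard_lt_ncard (hV.sdiff_ssubset_of_nonempty hVne) hs.sdiff

theorem Matroid.StronglyBaseOrderable.exists_isBase_finsum_notMem_ncard_sdiff_lt {α Γ : Type*}
    [AddCommGroup Γ] {M : Matroid α} [M.Finite] (hM : M.StronglyBaseOrderable)
    (ψ : α → Γ) {F : Finset Γ} {B B' : Set α} (hB : M.IsBase B) (hB' : M.IsBase B')
    (hψB' : ∑ᶠ e ∈ B', ψ e ∉ F) (hfar : F.card < (B \ B').ncard) :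
    ∃ B'', M.IsBase B'' ∧ ∑ᶠ e ∈ B'', ψ e ∉ F ∧ (B \ B'').ncard < (B \ B').ncard := by
  obtain ⟨φ, hφ, hexch⟩ := hM B' B hB' hB
  have hD : (B' \ B).Finite := M.set_finite _ (sdiff_subset.trans hB'.subset_ground)
  rw [hB.ncard_sdiff_comm hB', ncard_eq_toFinset_card _ hD] at hfar
  obtain ⟨W, hWD, hWne, hW⟩ := Finset.exists_nonempty_add_sum_notMem_of_card_lt
    (fun z => ψ (φ z) - ψ z) hψB' hfar
  rw [Finite.subset_toFinset] at hWD
  rw [← Finset.coe_nonempty] at hWne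
  have hφW : φ '' W ⊆ B \ B' := (image_mono hWD).trans hφ.mapsTo.image_subset
  refine ⟨_, hexch W hWD, ?_, ?_⟩
  · rwa [finsum_mem_sdiff_union_image ψ (M.set_finite B' hB'.subset_ground)
      (hWD.trans sdiff_subset) (hφ.injOn.mono hWD)
      (disjoint_left.2 fun x hx hx' => (hφW hx').2 hx), finsum_mem_coe_finset]
  · exact ncard_sdiff_sdiff_union_lt (M.set_finite B hB.subset_ground)
      (disjoint_left.2 fun x hx => (hWD hx).2) hφW (hWne.image φ)

/-- If `M` is strongly base orderable and an `F`-avoiding basis exists,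
then for each basis `B` there is an `F`-avoiding basis `B*` with `|B \ B*| ≤ |F|`. -/
theorem stmt_9 {α Γ : Type*} [AddCommGroup Γ] (M : Matroid α) [M.Finite]
    (hsbo : ∀ B₁ B₂, M.IsBase B₁ → M.IsBase B₂ → ∃ φ : α → α,
      Set.BijOn φ (B₁ \ B₂) (B₂ \ B₁) ∧
      ∀ Z ⊆ B₁ \ B₂, M.IsBase ((B₁ \ Z) ∪ φ '' Z))
    (ψ : α → Γ) (F : Finset Γ)
    (hex : ∃ B', M.IsBase B' ∧ (∑ᶠ e ∈ B', ψ e) ∉ F)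
    (B : Set α) (hB : M.IsBase B) :
    ∃ Bstar, M.IsBase Bstar ∧ (∑ᶠ e ∈ Bstar, ψ e) ∉ F ∧
      (B \ Bstar).ncard ≤ F.card := by
  obtain ⟨B', ⟨hB', hψB'⟩, hclosest⟩ := (measure fun B' => (B \ B').ncard).wf.has_min
    {B' | M.IsBase B' ∧ ∑ᶠ e ∈ B', ψ e ∉ F} hex
  refine ⟨B', hB', hψB', not_lt.1 fun hfar => ?_⟩
  obtain ⟨B'', hB'', hψB'', hcloser⟩ :=
    Matroid.StronglyBaseOrderable.exists_isBase_finsum_notMem_ncard_sdiff_lt hsbo ψ hB hB'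
      hψB' hfar
  exact hclosest B'' ⟨hB'', hψB''⟩ hcloser
end

section
/- Let B₁ and B₂ be two bases of a matroid M, and let M' be obtained from M by contracting a subset of B₁ and deleting a subset of E(M) \ B₁, such that B₁' = B₁ ∩ E(M') and B₂' = B₂ ∩ E(M') partition E(M') into two disjoint bases of M'. Suppose there exist pairwise disjoint nonempty subsets X₁, …, X_k ⊆ B₁' and Y₁, …, Y_k ⊆ B₂' such that (B₁' \ ⋃_{i∈Z} X_i) ∪ ⋃_{i∈Z} Y_i is a basis of M' for every Z ⊆ [k]. Then there exist pairwise disjoint nonempty subsets X₁, …, X_k ⊆ B₁ \ B₂ and Y₁, …, Y_k ⊆ B₂ \ B₁ such that (B₁ \ ⋃_{i∈Z} X_i) ∪ ⋃_{i∈Z} Y_i is a basis of M for every Z ⊆ [k]. -/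
open scoped Matroid

/-- The contraction `M / C` of a matroid, obtained by duality from restriction. -/
noncomputable def Matroid.contract' {α : Type*} (M : Matroid α) (C : Set α) : Matroid α :=
  (M✶ ↾ (M.E \ C))✶

/-- The deletion `M \ D` of a matroid, i.e. the restriction to `M.E \ D`. -/
noncomputable def Matroid.delete' {α : Type*} (M : Matroid α) (D : Set α) : Matroid α :=
  M ↾ (M.E \ D)

/-! As `C ⊆ B₁` is independent, the bases of `M ／ C` are the sets `S` disjoint from `C` with
`S ∪ C` a base of `M`; and `D` avoids the base `B₁ \ C` of `M ／ C`, so it is coindependent there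
and deleting it does not change bases. Hence every base `S` of `M'` lifts to the base `S ∪ C` of
`M`, and the same sets `Xᵢ`, `Yᵢ` work in `M`: putting `C` back into an exchanged base of `M'`
gives the corresponding exchanged base of `M`. -/

open Set

namespace Matroid

variable {α : Type*} {M : Matroid α} {B C D S : Set α}

lemma contract'_eq_contract (M : Matroid α) (C : Set α) : M.contract' C = M ／ C := rfl

lemma delete'_eq_delete (M : Matroid α) (D : Set α) : M.delete' D = M ＼ D := rfl

lemma IsBase.contract_sdiff (hB : M.IsBase B) (hC : C ⊆ B) : (M ／ C).IsBase (B \ C) := by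
  rw [(hB.indep.subset hC).contract_isBase_iff, sdiff_union_of_subset hC]
  exact ⟨hB, disjoint_sdiff_left⟩

lemma IsBase.union_of_contract_delete (hB : M.IsBase B) (hC : C ⊆ B) (hD : D ⊆ M.E \ B)
    (hS : (M ／ C ＼ D).IsBase S) : M.IsBase (S ∪ C) := by
  have hDcoindep : (M ／ C).Coindep D := by
    refine coindep_iff_subset_compl_isBase.2 ⟨B \ C, hB.contract_sdiff hC, ?_⟩
    intro x hx
    exact ⟨⟨(hD hx).1, fun hxC ↦ (hD hx).2 (hC hxC)⟩, fun hxB ↦ (hD hx).2 hxB.1⟩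
  exact (((hB.indep.subset hC).contract_isBase_iff).1 (hDcoindep.delete_isBase_iff.1 hS).1).1

end Matroid

namespace Set

lemma subset_sdiff_of_subset_inter_of_disjoint {α : Type*} {A B E X : Set α}
    (hX : X ⊆ A ∩ E) (hAB : Disjoint (A ∩ E) (B ∩ E)) : X ⊆ A \ B :=
  fun _ hx ↦ ⟨(hX hx).1, fun hxB ↦ hAB.ne_of_mem (hX hx) ⟨hxB, (hX hx).2⟩ rfl⟩

lemma sdiff_sdiff_union_union_eq {α : Type*} {B C U V : Set α} (hC : C ⊆ B)
    (hUC : Disjoint U C) : (B \ C) \ U ∪ V ∪ C = B \ U ∪ V := by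
  ext x
  by_cases hx : x ∈ C
  · simp [hx, hC hx, disjoint_right.1 hUC hx]
  · simp [hx]

lemma inter_sdiff_sdiff_eq {α : Type*} {B C D E : Set α} (hB : B ⊆ E) (hD : D ⊆ E \ B) :
    B ∩ ((E \ C) \ D) = B \ C := by
  ext
  constructor
  · exact fun ⟨hxB, ⟨_, hxC⟩, _⟩ ↦ ⟨hxB, hxC⟩
  · exact fun ⟨hxB, hxC⟩ ↦ ⟨hxB, ⟨hB hxB, hxC⟩, fun hxD ↦ (hD hxD).2 hxB⟩

end Set

theorem stmt_10_general {α : Type*} (M : Matroid α) (B₁ B₂ : Set α)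
    (hB₁ : M.IsBase B₁)
    (C D : Set α) (hC : C ⊆ B₁) (hD : D ⊆ M.E \ B₁)
    (M' : Matroid α) (hM' : M' = (M.contract' C).delete' D)
    (hpartdisj : Disjoint (B₁ ∩ M'.E) (B₂ ∩ M'.E))
    (k : ℕ) (X Y : Fin k → Set α)
    (hXsub : ∀ i, X i ⊆ B₁ ∩ M'.E) (hYsub : ∀ i, Y i ⊆ B₂ ∩ M'.E)
    (hXne : ∀ i, (X i).Nonempty) (hYne : ∀ i, (Y i).Nonempty)
    (hXdisj : Pairwise (Function.onFun Disjoint X))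
    (hYdisj : Pairwise (Function.onFun Disjoint Y))
    (hexch : ∀ Z : Set (Fin k),
      M'.IsBase (((B₁ ∩ M'.E) \ ⋃ i ∈ Z, X i) ∪ ⋃ i ∈ Z, Y i)) :
    ∃ X' Y' : Fin k → Set α,
      (∀ i, X' i ⊆ B₁ \ B₂) ∧ (∀ i, Y' i ⊆ B₂ \ B₁) ∧
      (∀ i, (X' i).Nonempty) ∧ (∀ i, (Y' i).Nonempty) ∧
      Pairwise (Function.onFun Disjoint X') ∧
      Pairwise (Function.onFun Disjoint Y') ∧
      ∀ Z : Set (Fin k), M.IsBase ((B₁ \ ⋃ i ∈ Z, X' i) ∪ ⋃ i ∈ Z, Y' i) := by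
  rw [Matroid.contract'_eq_contract, Matroid.delete'_eq_delete] at hM'
  subst hM'
  have hB₁E' : B₁ ∩ (M ／ C ＼ D).E = B₁ \ C :=
    inter_sdiff_sdiff_eq hB₁.subset_ground hD
  refine ⟨X, Y, fun i ↦ subset_sdiff_of_subset_inter_of_disjoint (hXsub i) hpartdisj,
    fun i ↦ subset_sdiff_of_subset_inter_of_disjoint (hYsub i) hpartdisj.symm,
    hXne, hYne, hXdisj, hYdisj, fun Z ↦ ?_⟩
  have hXC : Disjoint (⋃ i ∈ Z, X i) C :=
    disjoint_iUnion₂_left.2 fun i _ ↦ disjoint_left.2 fun x hx ↦ (hB₁E' ▸ hXsub i hx).2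
  rw [← sdiff_sdiff_union_union_eq hC hXC, ← hB₁E']
  exact hB₁.union_of_contract_delete hC hD (hexch Z)

/-- If `M'` is a `B₁`-minor of `M` such that `(B₁ ∩ E(M'), B₂ ∩ E(M'))` is
a basis partition of `M'` having the `k`-exchange property, then `(B₁, B₂)` has the
`k`-exchange property in `M`. -/
theorem stmt_10 {α : Type*} (M : Matroid α) [M.Finite] (B₁ B₂ : Set α)
    (hB₁ : M.IsBase B₁) (hB₂ : M.IsBase B₂)
    (C D : Set α) (hC : C ⊆ B₁) (hD : D ⊆ M.E \ B₁)
    (M' : Matroid α) (hM' : M' = (M.contract' C).delete' D)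
    (hpart1 : M'.IsBase (B₁ ∩ M'.E)) (hpart2 : M'.IsBase (B₂ ∩ M'.E))
    (hpartdisj : Disjoint (B₁ ∩ M'.E) (B₂ ∩ M'.E))
    (hpartun : (B₁ ∩ M'.E) ∪ (B₂ ∩ M'.E) = M'.E)
    (k : ℕ) (X Y : Fin k → Set α)
    (hXsub : ∀ i, X i ⊆ B₁ ∩ M'.E) (hYsub : ∀ i, Y i ⊆ B₂ ∩ M'.E)
    (hXne : ∀ i, (X i).Nonempty) (hYne : ∀ i, (Y i).Nonempty)
    (hXdisj : Pairwise (Function.onFun Disjoint X))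
    (hYdisj : Pairwise (Function.onFun Disjoint Y))
    (hexch : ∀ Z : Set (Fin k),
      M'.IsBase (((B₁ ∩ M'.E) \ ⋃ i ∈ Z, X i) ∪ ⋃ i ∈ Z, Y i)) :
    ∃ X' Y' : Fin k → Set α,
      (∀ i, X' i ⊆ B₁ \ B₂) ∧ (∀ i, Y' i ⊆ B₂ \ B₁) ∧
      (∀ i, (X' i).Nonempty) ∧ (∀ i, (Y' i).Nonempty) ∧
      Pairwise (Function.onFun Disjoint X') ∧
      Pairwise (Function.onFun Disjoint Y') ∧
      ∀ Z : Set (Fin k), M.IsBase ((B₁ \ ⋃ i ∈ Z, X' i) ∪ ⋃ i ∈ Z, Y' i) :=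
  stmt_10_general M B₁ B₂ hB₁ C D hC hD M' hM' hpartdisj k X Y hXsub hYsub hXne hYne hXdisj hYdisj
    hexch
end

section
/- Let Γ be an infinite abelian group and n a positive integer. Then there exists a subset G ⊆ Γ of cardinality n such that for every nonempty subset H ⊆ G and every choice of signs s_g ∈ {-1, +1} for g ∈ H, the signed sum ∑_{g ∈ H} s_g · g is nonzero. -/
lemma stmt_11_step {Γ : Type*} [AddCommGroup Γ] [Infinite Γ] [DecidableEq Γ] (G : Finset Γ)
    (hG : ∀ H ⊆ G, H.Nonempty → ∀ s : Γ → ℤ, (∀ g ∈ H, s g = 1 ∨ s g = -1) →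
        (∑ g ∈ H, s g • g) ≠ 0) :
    ∃ g ∉ G, ∀ H ⊆ insert g G, H.Nonempty → ∀ s : Γ → ℤ,
        (∀ g ∈ H, s g = 1 ∨ s g = -1) → (∑ g ∈ H, s g • g) ≠ 0 := by
  classical
  set B : Set Γ := (fun c : ↥G → ℤ => ∑ h ∈ G.attach, c h • (h : Γ)) ''
    {c | ∀ h, c h = -1 ∨ c h = 0 ∨ c h = 1} with hBdef
  have hB : B.Finite := by
    apply Set.Finite.image
    have hsub : {c : ↥G → ℤ | ∀ h, c h = -1 ∨ c h = 0 ∨ c h = 1} ⊆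
        Set.pi Set.univ (fun _ => ({-1, 0, 1} : Set ℤ)) := by
      intro c hc h _
      rcases hc h with h1 | h1 | h1 <;> simp [h1]
    exact Set.Finite.subset (Set.Finite.pi (fun _ =>
      (Set.finite_singleton _).insert _ |>.insert _)) hsub
  obtain ⟨g, hg⟩ := hB.infinite_compl.nonempty
  have hg : g ∉ B := hg
  have hgG : g ∉ G := by
    intro hmem
    apply hg
    refine ⟨fun h => if (h : Γ) = g then 1 else 0, fun h => by dsimp only; split <;> simp, ?_⟩
    dsimp only
    rw [Finset.sum_attach G (fun h => (if h = g then (1 : ℤ) else 0) • h)]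
    simp only [ite_smul, zero_smul, one_smul]
    rw [Finset.sum_ite_eq' G g (fun h => h)]
    simp [hmem]
  refine ⟨g, hgG, ?_⟩
  intro H hH hne s hs hsum
  by_cases hgH : g ∈ H
  · apply hg
    refine ⟨fun h => if (h : Γ) ∈ H then -(s g * s (h : Γ)) else 0, ?_, ?_⟩
    · intro h
      by_cases hh : (h : Γ) ∈ H
      · rcases hs g hgH with h1 | h1 <;> rcases hs _ hh with h2 | h2 <;>
          simp [hh, h1, h2]
      · simp [hh]
    · dsimp only
      rw [Finset.sum_attach G (fun h => (if h ∈ H then -(s g * s h) else 0) • h)]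
      simp only [ite_smul, zero_smul]
      rw [Finset.sum_ite_mem]
      have hGH : G ∩ H = H.erase g := by
        ext x
        simp only [Finset.mem_inter, Finset.mem_erase]
        constructor
        · rintro ⟨hxG, hxH⟩
          exact ⟨fun h => hgG (h ▸ hxG), hxH⟩
        · rintro ⟨hxg, hxH⟩
          refine ⟨?_, hxH⟩
          rcases Finset.mem_insert.mp (hH hxH) with h | h
          · exact absurd h hxg
          · exact h
      rw [hGH]
      have hsplit : (∑ h ∈ H, s h • h) = s g • g + ∑ h ∈ H.erase g, s h • h :=
        (Finset.add_sum_erase H (fun h => s h • h) hgH).symm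
      have hT : ∑ h ∈ H.erase g, s h • h = -(s g • g) :=
        eq_neg_of_add_eq_zero_right (hsplit ▸ hsum)
      calc ∑ h ∈ H.erase g, -(s g * s h) • h
          = ∑ h ∈ H.erase g, (-(s g)) • (s h • h) := by
            refine Finset.sum_congr rfl fun h _ => ?_
            rw [← mul_smul, neg_mul]
        _ = (-(s g)) • ∑ h ∈ H.erase g, s h • h := (Finset.smul_sum).symm
        _ = (-(s g)) • (-(s g • g)) := by rw [hT]
        _ = g := by rcases hs g hgH with h1 | h1 <;> simp [h1]
  · have hHG : H ⊆ G := fun x hx => by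
      rcases Finset.mem_insert.mp (hH hx) with h | h
      · exact absurd (h ▸ hx) hgH
      · exact h
    exact hG H hHG hne s hs hsum


/-- In an infinite abelian group there is an `n`-element subset `G` such
that every signed sum of a nonempty subset of `G` is nonzero. -/
theorem stmt_11 {Γ : Type*} [AddCommGroup Γ] [Infinite Γ] (n : ℕ) (hn : 0 < n) :
    ∃ G : Finset Γ, G.card = n ∧
      ∀ H ⊆ G, H.Nonempty → ∀ s : Γ → ℤ, (∀ g ∈ H, s g = 1 ∨ s g = -1) →
        (∑ g ∈ H, s g • g) ≠ 0 := by
  classical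
  clear hn
  induction n with
  | zero => exact ⟨∅, rfl, fun H hH hne => absurd (Finset.subset_empty.mp hH) hne.ne_empty⟩
  | succ k ih =>
    obtain ⟨G, hcard, hG⟩ := ih
    obtain ⟨g, hgG, hgood⟩ := stmt_11_step G hG
    exact ⟨insert g G, by rw [Finset.card_insert_of_notMem hgG, hcard], hgood⟩
end

section
/- Let q be a prime power, (α, β, γ) a triple of elements of GF(q) with α ≠ β and (β ≠ 0 or γ ≠ 0), and t a positive multiple of q(q-1). Then the t × t matrix A over GF(q) with A_{ij} = α for i < j, A_{ij} = β for i = j, and A_{ij} = γ for i > j is nonsingular. -/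
/-- Over a finite field of order `q`, the `(α, β, γ)`-diagonal matrix of
size `t` is nonsingular whenever `α ≠ β`, `(β ≠ 0 ∨ γ ≠ 0)` and `t` is a positive
multiple of `q(q-1)`. -/
theorem stmt_12 {F : Type*} [Field F] [Fintype F]
    (α β γ : F) (hαβ : α ≠ β) (hβγ : β ≠ 0 ∨ γ ≠ 0)
    (t : ℕ) (ht : 0 < t) (hdvd : Fintype.card F * (Fintype.card F - 1) ∣ t) :
    (Matrix.of fun i j : Fin t =>
      if (i : ℕ) < (j : ℕ) then α else if i = j then β else γ).det ≠ 0 := by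
  intro hdet
  obtain ⟨v, hv, hAv⟩ := Matrix.exists_mulVec_eq_zero_iff.mpr hdet
  set P : ℕ → F := fun n => ∑ j : Fin t, if (j : ℕ) < n then v j else 0 with hP
  have hβα : β - α ≠ 0 := sub_ne_zero.mpr (Ne.symm hαβ)
  have hP0 : P 0 = 0 := by simp [hP]
  -- step lemma for P
  have hPv : ∀ i : Fin t, P ((i : ℕ) + 1) = P (i : ℕ) + v i := by
    intro i
    simp only [hP]
    have step : ∀ j : Fin t, (if (j : ℕ) < (i : ℕ) + 1 then v j else 0)
        = (if (j : ℕ) < (i : ℕ) then v j else 0) + (if j = i then v j else 0) := by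
      intro j
      simp only [Fin.ext_iff]
      split_ifs
      all_goals try (exfalso; omega)
      all_goals ring
    rw [Finset.sum_congr rfl fun j _ => step j, Finset.sum_add_distrib]
    congr 1
    simp [Finset.sum_ite_eq' Finset.univ i v]
  -- the key equation from each row
  have key : ∀ i : Fin t,
      γ * P (i : ℕ) + β * v i + α * (P t - P ((i : ℕ) + 1)) = 0 := by
    intro i
    have h := congrFun hAv i
    simp only [Matrix.mulVec, dotProduct, Matrix.of_apply, Pi.zero_apply] at h
    have hterm : ∀ j : Fin t,
        (if (i : ℕ) < (j : ℕ) then α else if i = j then β else γ) * v j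
        = γ * (if (j : ℕ) < (i : ℕ) then v j else 0)
          + β * (if j = i then v j else 0)
          + α * ((if (j : ℕ) < t then v j else 0)
              - (if (j : ℕ) < (i : ℕ) + 1 then v j else 0)) := by
      intro j
      have hjt : (j : ℕ) < t := j.isLt
      simp only [Fin.ext_iff]
      split_ifs
      all_goals try (exfalso; omega)
      all_goals ring
    rw [Finset.sum_congr rfl (fun j _ => hterm j)] at h
    rw [Finset.sum_add_distrib, Finset.sum_add_distrib, ← Finset.mul_sum,
      ← Finset.mul_sum, ← Finset.mul_sum, Finset.sum_sub_distrib] at h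
    have hvi : (∑ j : Fin t, if j = i then v j else 0) = v i := by
      simp [Finset.sum_ite_eq' Finset.univ i v]
    rw [hvi] at h
    simpa only [hP] using h
  -- recurrence
  have rec' : ∀ n : ℕ, n < t →
      (β - α) * P (n + 1) = (β - γ) * P n - α * P t := by
    intro n hn
    have h1 := key ⟨n, hn⟩
    have h2 := hPv ⟨n, hn⟩
    simp only [Fin.val_mk] at h1 h2
    linear_combination h1 + β * h2
  -- main closed form
  have claim : ∀ n, n ≤ t →
      (α - γ) * (β - α) ^ n * P n = α * P t * ((β - α) ^ n - (β - γ) ^ n) := by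
    intro n hn
    induction n with
    | zero => simp [hP0]
    | succ k ih =>
      have hkt : k < t := by omega
      have h1 := rec' k hkt
      have h2 := ih (by omega)
      calc (α - γ) * (β - α) ^ (k + 1) * P (k + 1)
          = (α - γ) * (β - α) ^ k * ((β - α) * P (k + 1)) := by ring
        _ = (α - γ) * (β - α) ^ k * ((β - γ) * P k - α * P t) := by rw [h1]
        _ = (β - γ) * ((α - γ) * (β - α) ^ k * P k)
            - (α - γ) * (β - α) ^ k * (α * P t) := by ring
        _ = (β - γ) * (α * P t * ((β - α) ^ k - (β - γ) ^ k))
            - (α - γ) * (β - α) ^ k * (α * P t) := by rw [h2]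
        _ = α * P t * ((β - α) ^ (k + 1) - (β - γ) ^ (k + 1)) := by ring
  -- arithmetic facts
  have hq1 : (Fintype.card F - 1) ∣ t := (dvd_mul_left _ _).trans hdvd
  have hqt : (Fintype.card F : ℕ) ∣ t := (dvd_mul_right _ _).trans hdvd
  have fermat : ∀ x : F, x ≠ 0 → x ^ t = 1 := by
    intro x hx
    obtain ⟨m, hm⟩ := hq1
    rw [hm, pow_mul, FiniteField.pow_card_sub_one_eq_one x hx, one_pow]
  have htF : (t : F) = 0 := by
    obtain ⟨m, hm⟩ := hqt
    rw [hm, Nat.cast_mul, FiniteField.cast_card_eq_zero, zero_mul]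
  have hβαt : (β - α) ^ t = 1 := fermat _ hβα
  -- P t = 0
  have hPt : P t = 0 := by
    have hc := claim t le_rfl
    rw [hβαt] at hc
    by_cases hbg : β = γ
    · have hγ0 : γ ≠ 0 := by
        rcases hβγ with h | h
        · exact hbg ▸ h
        · exact h
      have hz : (β - γ) = 0 := sub_eq_zero.mpr hbg
      rw [hz, zero_pow ht.ne'] at hc
      have hγP : γ * P t = 0 := by linear_combination -hc
      exact (mul_eq_zero.mp hγP).resolve_left hγ0
    · have h1 : (β - γ) ^ t = 1 := fermat _ (sub_ne_zero.mpr hbg)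
      rw [h1] at hc
      by_cases hαγ : α = γ
      · -- linear case: (β - α) * P n = -(n : F) * (α * P t)
        have claim2 : ∀ n, n ≤ t → (β - α) * P n = -(n : F) * (α * P t) := by
          intro n hn
          induction n with
          | zero => simp [hP0]
          | succ k ih =>
            have hkt : k < t := by omega
            have h1' := rec' k hkt
            have h2' := ih (by omega)
            rw [h1', ← hαγ, h2']
            push_cast
            ring
        have hc2 := claim2 t le_rfl
        rw [htF] at hc2
        simp only [neg_zero, zero_mul] at hc2
        exact (mul_eq_zero.mp hc2).resolve_left hβα
      · have h2 : (α - γ) * P t = 0 := by linear_combination hc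
        exact (mul_eq_zero.mp h2).resolve_left (sub_ne_zero.mpr hαγ)
  -- now everything vanishes
  have hPn : ∀ n, n ≤ t → P n = 0 := by
    intro n hn
    induction n with
    | zero => exact hP0
    | succ k ih =>
      have hkt : k < t := by omega
      have h1 := rec' k hkt
      rw [ih (by omega), hPt] at h1
      simp only [mul_zero, zero_sub, neg_zero, sub_zero] at h1
      have := mul_eq_zero.mp h1
      rcases this with h | h
      · exact absurd h hβα
      · exact h
  apply hv
  funext i
  have h := hPv i
  rw [hPn ((i : ℕ) + 1) i.isLt, hPn (i : ℕ) (le_of_lt i.isLt)] at h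
  simpa using h.symm
end

section
/- For a triple (α, β, γ) of elements of a field and a positive integer t, let A be the t × t matrix with A_{ij} = α for i < j, A_{ij} = β for i = j, and A_{ij} = γ for i > j. Then det(A) = (α(β-γ)^t - γ(β-α)^t)/(α-γ) if α ≠ γ, and det(A) = (β-α)^{t-1}·((t-1)α + β) if α = γ. -/
/-!
Adding a constant `x` to every entry of a square matrix changes its determinant by `x * c`, with `c`
independent of `x` (subtract one row from all the others, then use linearity in that row).
Shifting the `(α, β, γ)`-diagonal matrix by `-α` or by `-γ` makes it triangular with diagonal
`β - α` or `β - γ`; eliminating `c` between these two values gives the formula for `α ≠ γ`.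
For `α = γ` the matrix is `(β - α) • 1 + α • 𝟙𝟙ᵀ`, whose determinant is a value of the
characteristic polynomial of a rank-one matrix.
-/

open Matrix

namespace Matrix

section CommRing

variable {R n : Type*} [CommRing R] [Fintype n] [DecidableEq n]

theorem det_add_const (A : Matrix n n R) (k : n) (x : R) :
    (A + of fun _ _ => x).det = A.det + x * ((A - of fun _ j => A k j).updateRow k 1).det := by
  set D := A - of fun _ j => A k j
  -- adding row `k` back to every other row of `D.updateRow k (A k + v)` gives `A + 1 vᵀ`
  have hrow : ∀ v : n → R, (A + of fun _ j => v j).det = (D.updateRow k (A k + v)).det :=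
    fun v => det_eq_of_forall_row_eq_smul_add_const (fun i => if i = k then 0 else 1) k
      (if_pos rfl) fun i j => by
        by_cases hik : i = k
        · subst hik; simp
        · simp [hik, D, ← add_assoc]
  have hA : (D.updateRow k (A k)).det = A.det := by
    rw [← add_zero (A k), ← hrow 0]
    congr 1
    ext
    simp
  calc (A + of fun _ _ => x).det = (D.updateRow k (A k + x • 1)).det := by
        rw [← hrow]
        simp
    _ = A.det + x * (D.updateRow k 1).det := by
      rw [det_updateRow_add, det_updateRow_smul, hA]

theorem det_scalar_add_vecMulVec (s : R) (u v : n → R) :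
    (scalar n s + vecMulVec u v).det
      = s ^ Fintype.card n + (u ⬝ᵥ v) * s ^ (Fintype.card n - 1) := by
  have := eval_charpoly (vecMulVec (-u) v) s
  rw [charpoly_vecMulVec, neg_vecMulVec, sub_neg_eq_add] at this
  rw [← this]
  simp [sub_eq_add_neg]

end CommRing

section LinearOrder

variable {R n : Type*} [CommRing R] [LinearOrder n]

def abgDiagonal (α β γ : R) : Matrix n n R :=
  of fun i j => if i < j then α else if i = j then β else γ

theorem abgDiagonal_add_const (α β γ x : R) :
    (abgDiagonal α β γ + of fun _ _ => x : Matrix n n R)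
      = abgDiagonal (α + x) (β + x) (γ + x) := by
  ext i j
  simp only [abgDiagonal, add_apply, of_apply]
  split_ifs <;> rfl

theorem det_abgDiagonal_zero_left [Fintype n] (β γ : R) :
    (abgDiagonal 0 β γ : Matrix n n R).det = β ^ Fintype.card n := by
  have hlower : (abgDiagonal 0 β γ : Matrix n n R).IsLowerTriangular :=
    fun i j hij => if_pos hij
  rw [det_of_isLowerTriangular _ hlower]
  simp [abgDiagonal]

theorem det_abgDiagonal_zero_right [Fintype n] (α β : R) :
    (abgDiagonal α β 0 : Matrix n n R).det = β ^ Fintype.card n := by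
  have hupper : (abgDiagonal α β 0 : Matrix n n R).IsUpperTriangular := fun i j (hji : j < i) => by
    simp [abgDiagonal, hji.not_gt, hji.ne']
  rw [det_of_isUpperTriangular hupper]
  simp [abgDiagonal]

theorem sub_mul_det_abgDiagonal [Fintype n] [Nonempty n] (α β γ : R) :
    (α - γ) * (abgDiagonal α β γ : Matrix n n R).det
      = α * (β - γ) ^ Fintype.card n - γ * (β - α) ^ Fintype.card n := by
  obtain ⟨k⟩ := ‹Nonempty n›
  set c := ((abgDiagonal α β γ - of fun _ j => abgDiagonal α β γ k j).updateRow k 1).det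
  -- the determinant is affine along the all-`x` direction; evaluate it at the two triangular points
  have hshift : ∀ x : R, (abgDiagonal (α + x) (β + x) (γ + x) : Matrix n n R).det
      = (abgDiagonal α β γ).det + x * c := fun x => by
    rw [← abgDiagonal_add_const, det_add_const _ k]
  have hlower := hshift (-α)
  have hupper := hshift (-γ)
  rw [add_neg_cancel, ← sub_eq_add_neg, ← sub_eq_add_neg, det_abgDiagonal_zero_left] at hlower
  rw [add_neg_cancel, ← sub_eq_add_neg, ← sub_eq_add_neg, det_abgDiagonal_zero_right] at hupper
  linear_combination γ * hlower - α * hupper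

theorem abgDiagonal_self [Fintype n] (α β : R) :
    (abgDiagonal α β α : Matrix n n R) = scalar n (β - α) + vecMulVec 1 (fun _ => α) := by
  ext i j
  by_cases hij : i = j
  · subst hij; simp [abgDiagonal]
  · simp [abgDiagonal, hij]

theorem det_abgDiagonal_self [Fintype n] (α β : R) :
    (abgDiagonal α β α : Matrix n n R).det
      = (β - α) ^ Fintype.card n + Fintype.card n • α * (β - α) ^ (Fintype.card n - 1) := by
  rw [abgDiagonal_self, det_scalar_add_vecMulVec]
  simp [dotProduct]

end LinearOrder

end Matrix

/-- Determinant formula for the `(α, β, γ)`-diagonal matrix of size `t`. -/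
theorem stmt_13 {K : Type*} [Field K] (α β γ : K) (t : ℕ) (ht : 0 < t) :
    (α ≠ γ →
      (Matrix.of fun i j : Fin t =>
        if (i : ℕ) < (j : ℕ) then α else if i = j then β else γ).det
        = (α * (β - γ) ^ t - γ * (β - α) ^ t) / (α - γ)) ∧
    (α = γ →
      (Matrix.of fun i j : Fin t =>
        if (i : ℕ) < (j : ℕ) then α else if i = j then β else γ).det
        = (β - α) ^ (t - 1) * ((t - 1) • α + β)) := by
  have : Nonempty (Fin t) := ⟨⟨0, ht⟩⟩
  change (α ≠ γ → (abgDiagonal α β γ : Matrix (Fin t) (Fin t) K).det = _) ∧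
    (α = γ → (abgDiagonal α β γ : Matrix (Fin t) (Fin t) K).det = _)
  constructor
  · intro hαγ
    rw [eq_div_iff (sub_ne_zero.mpr hαγ), mul_comm, sub_mul_det_abgDiagonal, Fintype.card_fin]
  · rintro rfl
    obtain ⟨n, rfl⟩ := Nat.exists_eq_add_of_lt ht
    rw [det_abgDiagonal_self, Fintype.card_fin]
    simp only [zero_add, Nat.add_sub_cancel, succ_nsmul]
    ring
end

section
/- Let G be a graph containing a Hamiltonian path P = v₁, …, v_n, and let Z ⊆ E(G) \ E(P) with |Z| ≥ k·ℓ for nonnegative integers k, ℓ. Then either there exists q ∈ [n] such that at least k edges of Z join {v₁, …, v_{q-1}} to {v_q, …, v_n}, or there exists a collection of ℓ edge-disjoint cycles in G each of which contains exactly one edge of Z. -/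
open SimpleGraph

section Aux

variable {V : Type*} {G : SimpleGraph V} {n : ℕ} {v : Fin n → V}

def pw (G : SimpleGraph V) (n : ℕ) (v : Fin n → V)
    (hpath : ∀ (i : ℕ) (h1 : i < n) (h2 : i + 1 < n), G.Adj (v ⟨i, h1⟩) (v ⟨i + 1, h2⟩)) :
    (i d : ℕ) → (h : i + d < n) → G.Walk (v ⟨i, by omega⟩) (v ⟨i + d, h⟩)
  | i, 0, h => Walk.nil
  | i, d+1, h => Walk.cons (hpath i (by omega) (by omega))
      ((pw G n v hpath (i+1) d (by omega)).copy rfl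
        (by congr 1; exact Fin.ext (by simp; omega)))

variable {hpath : ∀ (i : ℕ) (h1 : i < n) (h2 : i + 1 < n), G.Adj (v ⟨i, h1⟩) (v ⟨i + 1, h2⟩)}

lemma pw_edges : ∀ (d i : ℕ) (h : i + d < n) (e : Sym2 V),
    e ∈ (pw G n v hpath i d h).edges ↔
      ∃ (t : ℕ) (h1 : t < n) (h2 : t + 1 < n), i ≤ t ∧ t + 1 ≤ i + d ∧
        e = s(v ⟨t, h1⟩, v ⟨t + 1, h2⟩)
  | 0, i, h, e => by
    simp [pw]
    rintro t h1 h2 ht1 ht2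
    omega
  | (d+1), i, h, e => by
    rw [pw]
    simp only [Walk.edges_cons, Walk.edges_copy, List.mem_cons, pw_edges d (i+1)]
    constructor
    · rintro (rfl | ⟨t, h1, h2, ht1, ht2, rfl⟩)
      · exact ⟨i, by omega, by omega, le_refl _, by omega, rfl⟩
      · exact ⟨t, h1, h2, by omega, by omega, rfl⟩
    · rintro ⟨t, h1, h2, ht1, ht2, rfl⟩
      rcases eq_or_lt_of_le ht1 with rfl | hlt
      · exact Or.inl rfl
      · exact Or.inr ⟨t, h1, h2, by omega, by omega, rfl⟩

lemma pw_support : ∀ (d i : ℕ) (h : i + d < n) (u : V),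
    u ∈ (pw G n v hpath i d h).support ↔
      ∃ (t : ℕ) (h1 : t < n), i ≤ t ∧ t ≤ i + d ∧ u = v ⟨t, h1⟩
  | 0, i, h, u => by
    simp [pw]
    constructor
    · rintro rfl; exact ⟨i, by omega, le_refl _, by omega, rfl⟩
    · rintro ⟨t, h1, ht1, ht2, rfl⟩
      congr 1; exact Fin.ext (by simp; omega)
  | (d+1), i, h, u => by
    rw [pw]
    simp only [Walk.support_cons, Walk.support_copy, List.mem_cons, pw_support d (i+1)]
    constructor
    · rintro (rfl | ⟨t, h1, ht1, ht2, rfl⟩)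
      · exact ⟨i, by omega, le_refl _, by omega, rfl⟩
      · exact ⟨t, h1, by omega, by omega, rfl⟩
    · rintro ⟨t, h1, ht1, ht2, rfl⟩
      rcases eq_or_lt_of_le ht1 with rfl | hlt
      · exact Or.inl rfl
      · exact Or.inr ⟨t, h1, by omega, by omega, rfl⟩

lemma pw_isPath (hvinj : Function.Injective v) : ∀ (d i : ℕ) (h : i + d < n),
    (pw G n v hpath i d h).IsPath
  | 0, i, h => by rw [pw]; exact Walk.IsPath.nil
  | (d+1), i, h => by
    rw [pw]
    rw [Walk.cons_isPath_iff]
    refine ⟨(Walk.isPath_copy _ _ _).mpr (pw_isPath hvinj d (i+1) _), ?_⟩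
    rw [Walk.support_copy, pw_support]
    rintro ⟨t, h1, ht1, ht2, heq⟩
    have := hvinj heq
    have : i = t := by simpa [Fin.ext_iff] using this
    omega

lemma pick {n k : ℕ} (hk : 0 < k) :
    ∀ (l : ℕ) (J : Finset (Fin n × Fin n)) (_ : ∀ p ∈ J, (p.1 : ℕ) < (p.2 : ℕ))
      (_ : ∀ q : ℕ, (J.filter (fun p => (p.1 : ℕ) < q ∧ q ≤ (p.2 : ℕ))).card < k)
      (_ : k * l ≤ J.card),
    ∃ c : Fin l → Fin n × Fin n, (∀ i, c i ∈ J) ∧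
      ∀ i j : Fin l, i < j → ((c i).2 : ℕ) ≤ ((c j).1 : ℕ)
  | 0, J, _, _, _ => ⟨fun i => i.elim0, fun i => i.elim0, fun i => i.elim0⟩
  | (m+1), J, hlt, hcut, hcard => by
    have hne : J.Nonempty := by
      rw [← Finset.card_pos]; nlinarith
    obtain ⟨p, hp, hmin⟩ := J.exists_min_image (fun p => ((p.2 : ℕ))) hne
    set q : ℕ := (p.2 : ℕ) with hq
    set Cs := J.filter (fun p' => ((p'.1 : ℕ)) < q ∧ q ≤ ((p'.2 : ℕ))) with hCs
    have hpC : p ∈ Cs := by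
      rw [hCs, Finset.mem_filter]
      exact ⟨hp, hlt p hp, le_refl _⟩
    have hCsub : Cs ⊆ J := Finset.filter_subset _ _
    have hCcard : Cs.card < k := hcut q
    set J' := J \ Cs with hJ'
    have hJ'sub : J' ⊆ J := Finset.sdiff_subset
    have hJ'card : k * m ≤ J'.card := by
      rw [hJ', Finset.card_sdiff_of_subset hCsub]
      have h0 := Finset.card_pos.2 ⟨p, hpC⟩
      have h1 : k * (m+1) ≤ J.card := hcard
      have h2 : k * (m+1) = k * m + k := by ring
      omega
    have hcut' : ∀ q' : ℕ, (J'.filter (fun p => (p.1 : ℕ) < q' ∧ q' ≤ (p.2 : ℕ))).card < k := by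
      intro q'
      exact lt_of_le_of_lt (Finset.card_le_card (Finset.filter_subset_filter _ hJ'sub)) (hcut q')
    obtain ⟨c', hc'J, hc'ord⟩ := pick hk m J' (fun p hp' => hlt p (hJ'sub hp')) hcut' hJ'card
    refine ⟨Fin.cons p c', ?_, ?_⟩
    · intro i
      rcases Fin.eq_zero_or_eq_succ i with rfl | ⟨i', rfl⟩
      · simpa using hp
      · simpa using hJ'sub (hc'J i')
    · intro i j hij
      rcases Fin.eq_zero_or_eq_succ j with rfl | ⟨j', rfl⟩
      · exact absurd hij (by simp)
      rcases Fin.eq_zero_or_eq_succ i with rfl | ⟨i', rfl⟩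
      · simp only [Fin.cons_zero, Fin.cons_succ]
        have hmem := hc'J j'
        have hnotC : c' j' ∉ Cs := by
          rw [hJ', Finset.mem_sdiff] at hmem
          exact hmem.2
        have hJmem : c' j' ∈ J := hJ'sub hmem
        rw [hCs, Finset.mem_filter] at hnotC
        push_neg at hnotC
        have h2 := hmin _ hJmem
        by_contra hcon
        push_neg at hcon
        exact absurd (hnotC hJmem hcon) (by omega)
      · simp only [Fin.cons_succ]
        exact hc'ord i' j' (by simpa using hij)

end Aux



/-- If `G` has a Hamiltonian path `v₁, …, v_n` and `Z` is a set of non-path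
edges with `|Z| ≥ k·ℓ`, then either some "prefix cut" of the path is crossed by at least
`k` edges of `Z`, or `G` has `ℓ` edge-disjoint cycles each containing exactly one edge
of `Z`. -/
theorem stmt_15 {V : Type*} [Fintype V] [DecidableEq V] (G : SimpleGraph V)
    (n : ℕ) (hn : Fintype.card V = n)
    (v : Fin n → V) (hv : Function.Bijective v)
    (hpath : ∀ (i : ℕ) (h1 : i < n) (h2 : i + 1 < n), G.Adj (v ⟨i, h1⟩) (v ⟨i + 1, h2⟩))
    (k ℓ : ℕ) (Z : Set (Sym2 V))
    (hZE : Z ⊆ G.edgeSet)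
    (hZP : ∀ (i : ℕ) (h1 : i < n) (h2 : i + 1 < n), s(v ⟨i, h1⟩, v ⟨i + 1, h2⟩) ∉ Z)
    (hcard : k * ℓ ≤ Z.ncard) :
    (∃ q : ℕ, q ≤ n ∧
      k ≤ {e ∈ Z | ∃ i j : Fin n, (i : ℕ) < q ∧ q ≤ (j : ℕ) ∧ e = s(v i, v j)}.ncard) ∨
    (∃ C : Fin ℓ → Σ u : V, G.Walk u u,
      (∀ i, (C i).2.IsCycle) ∧
      (∀ i j, i ≠ j → ∀ e ∈ (C i).2.edges, e ∉ (C j).2.edges) ∧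
      (∀ i, ∃! e, e ∈ (C i).2.edges ∧ e ∈ Z)) := by
  classical
  rcases Nat.eq_zero_or_pos k with rfl | hk
  · exact Or.inl ⟨0, Nat.zero_le n, Nat.zero_le _⟩
  by_cases hL : ∃ q : ℕ, q ≤ n ∧
      k ≤ {e ∈ Z | ∃ i j : Fin n, (i : ℕ) < q ∧ q ≤ (j : ℕ) ∧ e = s(v i, v j)}.ncard
  · exact Or.inl hL
  push_neg at hL
  right
  have vinj : Function.Injective v := hv.1
  -- decompose Sym2 equalities
  have sym2inj : ∀ {x y x' y' : Fin n}, s(v x, v y) = s(v x', v y') →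
      (x = x' ∧ y = y') ∨ (x = y' ∧ y = x') := by
    intro x y x' y' h
    rw [Sym2.eq_iff] at h
    rcases h with ⟨h1, h2⟩ | ⟨h1, h2⟩
    · exact Or.inl ⟨vinj h1, vinj h2⟩
    · exact Or.inr ⟨vinj h1, vinj h2⟩
  set f : Fin n × Fin n → Sym2 V := fun p => s(v p.1, v p.2) with hf
  set J : Finset (Fin n × Fin n) :=
    Finset.univ.filter (fun p => (p.1 : ℕ) < (p.2 : ℕ) ∧ s(v p.1, v p.2) ∈ Z) with hJ
  have hJlt : ∀ p ∈ J, (p.1 : ℕ) < (p.2 : ℕ) := by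
    intro p hp; rw [hJ, Finset.mem_filter] at hp; exact hp.2.1
  have hJZ : ∀ p ∈ J, s(v p.1, v p.2) ∈ Z := by
    intro p hp; rw [hJ, Finset.mem_filter] at hp; exact hp.2.2
  -- f is injective on pairs with increasing coordinates
  have finj : ∀ p ∈ J, ∀ p' ∈ J, f p = f p' → p = p' := by
    intro p hp p' hp' heq
    rcases sym2inj heq with ⟨h1, h2⟩ | ⟨h1, h2⟩
    · exact Prod.ext h1 h2
    · have := hJlt p hp
      have := hJlt p' hp'
      have e1 : (p.1 : ℕ) = (p'.2 : ℕ) := congrArg Fin.val h1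
      have e2 : (p.2 : ℕ) = (p'.1 : ℕ) := congrArg Fin.val h2
      omega
  -- every edge of Z is the image of an element of J
  have hZsub : Z ⊆ ↑(J.image f) := by
    intro e he
    induction e using Sym2.ind with
    | _ x y =>
      have hadj : G.Adj x y := (SimpleGraph.mem_edgeSet G).1 (hZE he)
      obtain ⟨i, rfl⟩ := hv.2 x
      obtain ⟨j, rfl⟩ := hv.2 y
      have hij : i ≠ j := fun h => G.ne_of_adj hadj (by rw [h])
      rcases lt_or_gt_of_ne (fun h : (i:ℕ) = (j:ℕ) => hij (Fin.ext h)) with hlt | hlt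
      · refine Finset.mem_coe.2 (Finset.mem_image.2 ⟨(i, j), ?_, rfl⟩)
        rw [hJ, Finset.mem_filter]
        exact ⟨Finset.mem_univ _, hlt, he⟩
      · refine Finset.mem_coe.2 (Finset.mem_image.2 ⟨(j, i), ?_, ?_⟩)
        · rw [hJ, Finset.mem_filter]
          exact ⟨Finset.mem_univ _, hlt, by rwa [Sym2.eq_swap]⟩
        · exact Sym2.eq_swap
  have hJcard : k * ℓ ≤ J.card := by
    calc k * ℓ ≤ Z.ncard := hcard
      _ ≤ (↑(J.image f) : Set (Sym2 V)).ncard := Set.ncard_le_ncard hZsub (Set.toFinite _)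
      _ = (J.image f).card := Set.ncard_coe_finset _
      _ ≤ J.card := Finset.card_image_le
  -- no cut is crossed by k edges
  have hcut : ∀ q : ℕ, (J.filter (fun p => (p.1 : ℕ) < q ∧ q ≤ (p.2 : ℕ))).card < k := by
    intro q
    by_contra hcon
    push_neg at hcon
    set F := J.filter (fun p => (p.1 : ℕ) < q ∧ q ≤ (p.2 : ℕ)) with hF
    have hFne : F.Nonempty := Finset.card_pos.1 (by omega)
    obtain ⟨p0, hp0⟩ := hFne
    have hqn : q ≤ n := by
      rw [hF, Finset.mem_filter] at hp0
      have := p0.2.isLt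
      omega
    refine absurd ?_ (not_le.2 (hL q hqn))
    have hsub : (↑(F.image f) : Set (Sym2 V)) ⊆
        {e ∈ Z | ∃ i j : Fin n, (i : ℕ) < q ∧ q ≤ (j : ℕ) ∧ e = s(v i, v j)} := by
      intro e he
      obtain ⟨p, hp, rfl⟩ := Finset.mem_image.1 (Finset.mem_coe.1 he)
      rw [hF, Finset.mem_filter] at hp
      exact ⟨hJZ p hp.1, p.1, p.2, hp.2.1, hp.2.2, rfl⟩
    calc k ≤ F.card := hcon
      _ = (F.image f).card :=
        (Finset.card_image_of_injOn (fun p hp p' hp' =>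
          finj p (Finset.filter_subset _ _ hp) p' (Finset.filter_subset _ _ hp'))).symm
      _ = (↑(F.image f) : Set (Sym2 V)).ncard := (Set.ncard_coe_finset _).symm
      _ ≤ _ := Set.ncard_le_ncard hsub (Set.toFinite _)
  obtain ⟨c, hcJ, hcord⟩ := pick hk ℓ J hJlt hcut hJcard
  -- build the cycles
  have hab : ∀ i, ((c i).1 : ℕ) < ((c i).2 : ℕ) := fun i => hJlt _ (hcJ i)
  have hZc : ∀ i, s(v (c i).1, v (c i).2) ∈ Z := fun i => hJZ _ (hcJ i)
  have hadj : ∀ i, G.Adj (v (c i).2) (v (c i).1) :=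
    fun i => ((SimpleGraph.mem_edgeSet G).1 (hZE (hZc i))).symm
  have hbound : ∀ i : Fin ℓ, ((c i).1 : ℕ) + (((c i).2 : ℕ) - ((c i).1 : ℕ)) < n := by
    intro i; have := ((c i).2).isLt; have := hab i; omega
  let pth : ∀ i : Fin ℓ, G.Walk (v (c i).1) (v (c i).2) := fun i =>
    (pw G n v hpath ((c i).1 : ℕ) (((c i).2 : ℕ) - ((c i).1 : ℕ)) (hbound i)).copy
      (by congr 1)
      (by congr 1; exact Fin.ext (by simp; have := hab i; omega))
  -- edge membership characterization for pth
  have hpthe : ∀ (i : Fin ℓ) (e : Sym2 V), e ∈ (pth i).edges ↔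
      ∃ (t : ℕ) (h1 : t < n) (h2 : t + 1 < n), ((c i).1 : ℕ) ≤ t ∧ t + 1 ≤ ((c i).2 : ℕ) ∧
        e = s(v ⟨t, h1⟩, v ⟨t + 1, h2⟩) := by
    intro i e
    rw [show (pth i).edges = (pw G n v hpath ((c i).1 : ℕ)
      (((c i).2 : ℕ) - ((c i).1 : ℕ)) (hbound i)).edges from Walk.edges_copy _ _ _, pw_edges]
    have := hab i
    constructor
    · rintro ⟨t, h1, h2, ht1, ht2, rfl⟩; exact ⟨t, h1, h2, ht1, by omega, rfl⟩
    · rintro ⟨t, h1, h2, ht1, ht2, rfl⟩; exact ⟨t, h1, h2, ht1, by omega, rfl⟩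
  -- no edge of Z is a path edge
  have hZnp : ∀ e ∈ Z, ∀ (t : ℕ) (h1 : t < n) (h2 : t + 1 < n),
      e ≠ s(v ⟨t, h1⟩, v ⟨t + 1, h2⟩) := by
    intro e he t h1 h2 heq
    exact hZP t h1 h2 (heq ▸ he)
  have hchordZ : ∀ i : Fin ℓ, s(v (c i).2, v (c i).1) ∈ Z := by
    intro i; rw [Sym2.eq_swap]; exact hZc i
  refine ⟨fun i => ⟨v (c i).2, Walk.cons (hadj i) (pth i)⟩, ?_, ?_, ?_⟩
  · -- cycles
    intro i
    rw [Walk.cons_isCycle_iff]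
    refine ⟨(Walk.isPath_copy _ _ _).mpr (pw_isPath vinj _ _ _), ?_⟩
    rw [hpthe]
    rintro ⟨t, h1, h2, ht1, ht2, heq⟩
    exact hZnp _ (hchordZ i) t h1 h2 heq
  · -- edge-disjoint
    have key : ∀ i j : Fin ℓ, i < j → ∀ e, e ∈ (Walk.cons (hadj i) (pth i)).edges →
        e ∈ (Walk.cons (hadj j) (pth j)).edges → False := by
      intro i j hij e hei hej
      have hord : ((c i).2 : ℕ) ≤ ((c j).1 : ℕ) := hcord i j hij
      have habi := hab i
      have habj := hab j
      rw [Walk.edges_cons, List.mem_cons, hpthe] at hei hej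
      rcases hei with rfl | ⟨t, h1, h2, ht1, ht2, rfl⟩
      · rcases hej with heq | ⟨t, h1, h2, ht1, ht2, heq⟩
        · rcases sym2inj heq with ⟨e1, e2⟩ | ⟨e1, e2⟩ <;>
          · have f1 := congrArg Fin.val e1
            have f2 := congrArg Fin.val e2
            simp only [Fin.val_fin_lt] at *
            omega
        · exact hZnp _ (hchordZ i) t h1 h2 heq
      · rcases hej with heq | ⟨t', h1', h2', ht1', ht2', heq⟩
        · exact hZnp _ (hchordZ j) t h1 h2 heq.symm
        · rcases sym2inj heq with ⟨e1, e2⟩ | ⟨e1, e2⟩ <;>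
          · have f1 := congrArg Fin.val e1
            have f2 := congrArg Fin.val e2
            simp only at f1 f2
            omega
    intro i j hij e hei hej
    rcases lt_or_gt_of_ne hij with h | h
    · exact key i j h e hei hej
    · exact key j i h e hej hei
  · -- unique Z edge
    intro i
    refine ⟨s(v (c i).2, v (c i).1), ⟨by simp [Walk.edges_cons], hchordZ i⟩, ?_⟩
    rintro e ⟨hee, heZ⟩
    rw [Walk.edges_cons, List.mem_cons, hpthe] at hee
    rcases hee with rfl | ⟨t, h1, h2, ht1, ht2, heq⟩
    · rfl
    · exact absurd heq (hZnp _ heZ t h1 h2)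
end

section
/- Let r ≥ 2 and let E be a finite set with |E| ≥ r. Let H be a family of r-element subsets of E such that |H₁ ∩ H₂| ≤ r - 2 for all distinct H₁, H₂ ∈ H, and H is not the full family of r-element subsets. Then the family of all r-element subsets of E not in H forms the set of bases of a matroid of rank r on E. -/
/-!
Let `X` be a basis, `a ∈ X \ Y` for another basis `Y`, and `S = X \ {a}`, an `(r-1)`-set. If
`Y \ X = {b}` then `insert b S = Y` is a basis. Otherwise `Y \ X` holds two elements `b₁ ≠ b₂`,
and `insert b₁ S`, `insert b₂ S` are distinct `r`-sets meeting in at least `r - 1` elements,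
so they cannot both lie in `H`; the one that does not is a basis.
-/

open Set

/-- For a family of `r`-sets: no `(r-1)`-set lies in two members of `H`. -/
def IsSparsePavingFamily {α : Type*} (r : ℕ) (H : Set (Set α)) : Prop :=
  ∀ S₁ ∈ H, ∀ S₂ ∈ H, S₁ ≠ S₂ → (S₁ ∩ S₂).ncard ≤ r - 2

theorem insert_sdiff_singleton_eq_of_sdiff_eq_singleton {α : Type*} {X Y : Set α} {a b : α}
    (hXY : X \ Y = {a}) (hYX : Y \ X = {b}) : insert b (X \ {a}) = Y := by
  ext x
  have hx₁ := Set.ext_iff.1 hXY x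
  have hx₂ := Set.ext_iff.1 hYX x
  simp only [mem_sdiff, mem_singleton_iff, mem_insert_iff] at hx₁ hx₂ ⊢
  grind

namespace IsSparsePavingFamily

variable {α : Type*} [Finite α] {r : ℕ} {H : Set (Set α)}

theorem eq_of_subset_inter (hH : IsSparsePavingFamily r H) (hr : 2 ≤ r) {S S₁ S₂ : Set α}
    (hS : S.ncard = r - 1) (h₁ : S₁ ∈ H) (h₂ : S₂ ∈ H) (hS₁₂ : S ⊆ S₁ ∩ S₂) : S₁ = S₂ := by
  by_contra hne
  have hsmall := hH S₁ h₁ S₂ h₂ hne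
  have hlarge := ncard_le_ncard hS₁₂
  omega

theorem exchangeProperty (hH : IsSparsePavingFamily r H) :
    Matroid.ExchangeProperty (fun B : Set α ↦ B.ncard = r ∧ B ∉ H) := by
  rintro X Y ⟨hXr, hXH⟩ ⟨hYr, hYH⟩ a ha
  have hsdiff : (X \ Y).ncard = (Y \ X).ncard :=
    (ncard_eq_ncard_iff_ncard_sdiff_eq_ncard_sdiff).1 (hXr.trans hYr.symm)
  have hXY_le : (X \ Y).ncard ≤ r := hXr ▸ ncard_le_ncard sdiff_subset
  have hS : (X \ {a}).ncard = r - 1 := by rw [ncard_sdiff_singleton_of_mem ha.1, hXr]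
  have hins : ∀ b ∈ Y \ X, (insert b (X \ {a})).ncard = r := fun b hb ↦ by
    rw [ncard_insert_of_notMem fun h ↦ hb.2 h.1]
    have hpos : 0 < (X \ Y).ncard := (ncard_pos).2 ⟨a, ha⟩
    omega
  have hYX : (Y \ X).Nonempty := (ncard_pos).1 (hsdiff ▸ (ncard_pos).2 ⟨a, ha⟩)
  obtain ⟨b, hb⟩ | ⟨b₁, hb₁, b₂, hb₂, hb₁₂⟩ := hYX.exists_eq_singleton_or_nontrivial
  · obtain ⟨c, hc⟩ := ncard_eq_one.1 (hsdiff.trans (by rw [hb, ncard_singleton]))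
    obtain rfl : a = c := by simpa [hc] using ha
    refine ⟨b, hb ▸ rfl, ?_⟩
    rw [insert_sdiff_singleton_eq_of_sdiff_eq_singleton hc hb]
    exact ⟨hYr, hYH⟩
  by_cases hB₁ : insert b₁ (X \ {a}) ∈ H
  · refine ⟨b₂, hb₂, hins b₂ hb₂, fun hB₂ ↦ hb₁₂ ?_⟩
    have hr : 2 ≤ r := by
      have htwo := (one_lt_ncard_iff_nontrivial).2 ⟨b₁, hb₁, b₂, hb₂, hb₁₂⟩
      omega
    have hsub : X \ {a} ⊆ insert b₁ (X \ {a}) ∩ insert b₂ (X \ {a}) :=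
      subset_inter (subset_insert _ _) (subset_insert _ _)
    exact (insert_inj fun h ↦ hb₁.2 h.1).1 (hH.eq_of_subset_inter hr hS hB₁ hB₂ hsub)
  · exact ⟨b₁, hb₁, hins b₁ hb₁, hB₁⟩

end IsSparsePavingFamily

theorem stmt_16_general {α : Type*} [Fintype α] (r : ℕ)
    (H : Set (Set α))
    (hint : ∀ S₁ ∈ H, ∀ S₂ ∈ H, S₁ ≠ S₂ → (S₁ ∩ S₂).ncard ≤ r - 2)
    (hne : ∃ B : Set α, B.ncard = r ∧ B ∉ H) :
    ∃ M : Matroid α, M.E = Set.univ ∧ ∀ B, M.IsBase B ↔ (B.ncard = r ∧ B ∉ H) :=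
  ⟨Matroid.ofIsBaseOfFinite finite_univ _ hne (IsSparsePavingFamily.exchangeProperty hint)
    (fun B _ ↦ subset_univ B), rfl, fun B ↦ by rw [Matroid.ofIsBaseOfFinite_isBase]⟩

/-- If `H` is a family of `r`-element subsets of a finite set `E` (`r ≥ 2`,
`|E| ≥ r`), any two distinct members of `H` intersect in at most `r - 2` elements, and
`H` is not the full family of `r`-subsets, then the `r`-subsets not in `H` form the
bases of a matroid of rank `r` on `E`. -/
theorem stmt_16 {α : Type*} [Fintype α] (r : ℕ) (hr : 2 ≤ r)
    (hcard : r ≤ Fintype.card α)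
    (H : Set (Set α)) (hHr : ∀ S ∈ H, S.ncard = r)
    (hint : ∀ S₁ ∈ H, ∀ S₂ ∈ H, S₁ ≠ S₂ → (S₁ ∩ S₂).ncard ≤ r - 2)
    (hne : ∃ B : Set α, B.ncard = r ∧ B ∉ H) :
    ∃ M : Matroid α, M.E = Set.univ ∧ ∀ B, M.IsBase B ↔ (B.ncard = r ∧ B ∉ H) :=
  stmt_16_general r H hint hne
end

section
/- For every d ≥ 1, there exist a matroid M, a labeling ψ: E(M) → (ℤ₂)^d, and a basis B of M such that M has a basis B* with ψ(B*) = 0, and every basis B* with ψ(B*) = 0 satisfies |B \ B*| ≥ 2^{d-1} - 1. -/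
/-!
Take `G = (ℤ₂)^d`, `r = 2^(d-1) - 1`, a zero-sum `r`-set `B₀ ⊆ G`, and the sparse paving matroid
of rank `r` on `G` whose circuit-hyperplanes are the zero-sum `r`-sets other than `B₀`; this is a
matroid because two `r`-sets differing in a single element have different sums. Its only zero-sum
basis is `B₀`, and since `|G| = 2r + 2`, the complement of `B₀` contains an `r`-set with nonzero
sum, i.e. a basis disjoint from `B₀`.

A zero-sum `r`-set exists because `r` is odd (or zero): if an odd set `S` has sum `s ≠ 0`, then
translation by `s` does not preserve `S`, and replacing some `x ∈ S` with `x + s ∉ S` gives sum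
`s + s = 0`.
-/

open Set

namespace Finset

variable {G : Type*} [AddCommGroup G] [DecidableEq G]

lemma exists_subset_card_eq_sum_ne_zero {k : ℕ} (hk : 0 < k) {C : Finset G} (hkC : k < C.card) :
    ∃ T ⊆ C, T.card = k ∧ ∑ x ∈ T, x ≠ 0 := by
  obtain ⟨U, hUC, hU⟩ := exists_subset_card_eq (s := C) (n := k + 1) hkC
  obtain ⟨a, ha, b, hb, hab⟩ := one_lt_card.1 (by rw [hU]; omega)
  have hcard : ∀ x ∈ U, (U.erase x).card = k := fun x hx ↦ by rw [card_erase_of_mem hx, hU]; rfl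
  by_contra! h
  have hsa := h (U.erase a) ((erase_subset a U).trans hUC) (hcard a ha)
  have hsb := h (U.erase b) ((erase_subset b U).trans hUC) (hcard b hb)
  rw [sum_erase_eq_sub ha] at hsa
  rw [sum_erase_eq_sub hb] at hsb
  exact hab (sub_right_injective (hsa.trans hsb.symm))

variable [Module (ZMod 2) G]

lemma exists_add_notMem_of_odd_card {S : Finset G} (hS : Odd S.card) {s : G} (hs : s ≠ 0) :
    ∃ x ∈ S, x + s ∉ S := by
  by_contra! h
  have hmap : S.map (addRightEmbedding s) = S :=
    eq_of_subset_of_card_le (fun y hy ↦ by obtain ⟨x, hx, rfl⟩ := mem_map.1 hy; exact h x hx)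
      (by simp)
  have hsum : ∑ x ∈ S, (x + s) = ∑ x ∈ S, x := by
    conv_rhs => rw [← hmap, sum_map]
    rfl
  rw [sum_add_distrib, sum_const, add_eq_left] at hsum
  obtain ⟨m, hm⟩ := hS
  rw [hm, succ_nsmul, mul_nsmul', ZModModule.char_nsmul_eq_zero, zero_add] at hsum
  exact hs hsum

lemma exists_card_eq_sum_eq_zero_of_odd [Fintype G] {k : ℕ} (hk : Odd k)
    (hkG : k ≤ Fintype.card G) : ∃ S : Finset G, S.card = k ∧ ∑ x ∈ S, x = 0 := by
  obtain ⟨S, -, hS⟩ := exists_subset_card_eq (s := (univ : Finset G)) (n := k) (by simpa using hkG)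
  by_cases hsum : ∑ x ∈ S, x = 0
  · exact ⟨S, hS, hsum⟩
  obtain ⟨x, hx, hxs⟩ := exists_add_notMem_of_odd_card (hS ▸ hk) hsum
  have hxs' : x + ∑ y ∈ S, y ∉ S.erase x := fun h ↦ hxs (mem_of_mem_erase h)
  refine ⟨insert (x + ∑ y ∈ S, y) (S.erase x), ?_, ?_⟩
  · rw [card_insert_of_notMem hxs', card_erase_of_mem hx, hS]
    exact Nat.sub_add_cancel hk.pos
  · rw [sum_insert hxs', sum_erase_eq_sub hx, add_comm x, add_assoc, add_sub_cancel,
      ZModModule.add_self]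

end Finset

namespace Matroid

variable {α : Type*} [Finite α]

lemma exists_insert_notMem_of_ncard_lt {r : ℕ} {𝓗 : Set (Set α)}
    (hsep : ∀ I e f, e ∉ I → f ∉ I → insert e I ∈ 𝓗 → insert f I ∈ 𝓗 → e = f)
    {I J : Set α} (hJ : J.ncard ≤ r ∧ J ∉ 𝓗) (hIJ : I.ncard < J.ncard) :
    ∃ e ∈ J, e ∉ I ∧ (insert e I).ncard ≤ r ∧ insert e I ∉ 𝓗 := by
  obtain ⟨e, heJ, heI⟩ := exists_mem_notMem_of_ncard_lt_ncard hIJ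
  by_cases he : insert e I ∈ 𝓗
  · -- `J ∉ 𝓗` is at least as large as `insert e I ∈ 𝓗`, so some `f ∈ J` lies outside it
    have hJe : ¬ J ⊆ insert e I := fun hsub ↦
      hJ.2 (eq_of_subset_of_ncard_le hsub (by rw [ncard_insert_of_notMem heI]; omega) ▸ he)
    obtain ⟨f, hfJ, hf⟩ := not_subset.1 hJe
    rw [mem_insert_iff, not_or] at hf
    refine ⟨f, hfJ, hf.2, ?_, fun hf' ↦ hf.1 (hsep I f e hf.2 heI hf' he)⟩
    rw [ncard_insert_of_notMem hf.2]
    omega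
  · exact ⟨e, heJ, heI, by rw [ncard_insert_of_notMem heI]; omega, he⟩

/-- The sparse paving matroid of rank `r` with circuit-hyperplanes `𝓗`. -/
lemma exists_isBase_iff_ncard_eq_and_notMem (r : ℕ) (𝓗 : Set (Set α))
    (hcard : ∀ H ∈ 𝓗, H.ncard = r)
    (hsep : ∀ I e f, e ∉ I → f ∉ I → insert e I ∈ 𝓗 → insert f I ∈ 𝓗 → e = f)
    {B₀ : Set α} (hB₀ : B₀.ncard = r) (hB₀𝓗 : B₀ ∉ 𝓗) :
    ∃ M : Matroid α, ∀ B, M.IsBase B ↔ B.ncard = r ∧ B ∉ 𝓗 := by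
  have indep_empty : (∅ : Set α).ncard ≤ r ∧ ∅ ∉ 𝓗 := by
    refine ⟨by simp, fun h ↦ hB₀𝓗 ?_⟩
    have hr : r = 0 := (hcard ∅ h).symm.trans (ncard_empty α)
    rwa [(ncard_eq_zero (s := B₀)).1 (hB₀.trans hr)]
  have indep_subset : ∀ ⦃I J : Set α⦄, J.ncard ≤ r ∧ J ∉ 𝓗 → I ⊆ J → I.ncard ≤ r ∧ I ∉ 𝓗 := by
    intro I J hJ hIJ
    have hle := ncard_le_ncard hIJ
    refine ⟨hle.trans hJ.1, fun hI ↦ hJ.2 ?_⟩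
    rwa [← eq_of_subset_of_ncard_le hIJ (by rw [hcard I hI]; exact hJ.1)]
  let M := (IndepMatroid.ofFinite (toFinite univ) (fun I ↦ I.ncard ≤ r ∧ I ∉ 𝓗) indep_empty
    indep_subset (fun _ _ _ hJ hIJ ↦ exists_insert_notMem_of_ncard_lt hsep hJ hIJ)
    (fun I _ ↦ subset_univ I)).matroid
  have hindep : ∀ I, M.Indep I ↔ I.ncard ≤ r ∧ I ∉ 𝓗 := fun I ↦ Iff.rfl
  have hbase : ∀ B, B.ncard = r → B ∉ 𝓗 → M.IsBase B := fun B hB hB𝓗 ↦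
    ((hindep B).2 ⟨hB.le, hB𝓗⟩).isBase_of_maximal fun J hJ hBJ ↦
      eq_of_subset_of_ncard_le hBJ (hB ▸ ((hindep J).1 hJ).1)
  refine ⟨M, fun B ↦ ⟨fun hB ↦ ⟨?_, ((hindep B).1 hB.indep).2⟩, fun hB ↦ hbase B hB.1 hB.2⟩⟩
  exact (hB.ncard_eq_ncard_of_isBase (hbase B₀ hB₀ hB₀𝓗)).trans hB₀

lemma exists_isBase_iff_finsum_ne_zero_or_eq {G : Type*} [AddCommGroup G] [Finite G] {r : ℕ}
    {B₀ : Set G} (hB₀ : B₀.ncard = r) :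
    ∃ M : Matroid G, ∀ B, M.IsBase B ↔ B.ncard = r ∧ (∑ᶠ x ∈ B, x ≠ 0 ∨ B = B₀) := by
  have hsep : ∀ (I : Set G) e f, e ∉ I → f ∉ I → ∑ᶠ x ∈ insert e I, x = 0 →
      ∑ᶠ x ∈ insert f I, x = 0 → e = f := by
    intro I e f he hf hes hfs
    rw [finsum_mem_insert _ he (toFinite I)] at hes
    rw [finsum_mem_insert _ hf (toFinite I)] at hfs
    exact add_right_cancel (hes.trans hfs.symm)
  obtain ⟨M, hM⟩ := exists_isBase_iff_ncard_eq_and_notMem r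
    {H | H.ncard = r ∧ ∑ᶠ x ∈ H, x = 0 ∧ H ≠ B₀} (fun H hH ↦ hH.1)
    (fun I e f he hf hes hfs ↦ hsep I e f he hf hes.2.1 hfs.2.1) hB₀ (fun h ↦ h.2.2 rfl)
  refine ⟨M, fun B ↦ (hM B).trans ?_⟩
  simp only [mem_ofPred_eq]
  tauto

lemma exists_isBase_disjoint {G : Type*} [AddCommGroup G] [Finite G] {M : Matroid G} {r : ℕ}
    {B₀ : Set G} (hM : ∀ B, M.IsBase B ↔ B.ncard = r ∧ (∑ᶠ x ∈ B, x ≠ 0 ∨ B = B₀))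
    (hB₀ : B₀.ncard = r) (hr : r + r < Nat.card G) :
    ∃ B, M.IsBase B ∧ Disjoint B B₀ := by
  classical
  rcases r.eq_zero_or_pos with rfl | hr0
  · have hB₀e : B₀ = ∅ := (ncard_eq_zero (s := B₀)).1 hB₀
    exact ⟨∅, (hM ∅).2 ⟨ncard_empty G, Or.inr hB₀e.symm⟩, empty_disjoint _⟩
  · obtain ⟨T, hTC, hTcard, hTsum⟩ := Finset.exists_subset_card_eq_sum_ne_zero hr0
      (C := (toFinite B₀ᶜ).toFinset) (by rw [← ncard_eq_toFinset_card, ncard_compl, hB₀]; omega)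
    refine ⟨T, (hM T).2 ⟨ncard_coe_finset T ▸ hTcard, Or.inl ?_⟩, ?_⟩
    · rwa [finsum_mem_coe_finset]
    · rw [← subset_compl_iff_disjoint_right]
      simpa using hTC

end Matroid

lemma exists_card_eq_two_pow_pred_sub_one_sum_eq_zero (d : ℕ) :
    ∃ S : Finset (Fin d → ZMod 2), S.card = 2 ^ (d - 1) - 1 ∧ ∑ x ∈ S, x = 0 := by
  rcases le_or_gt d 1 with hd | hd
  · exact ⟨∅, by rw [Nat.sub_eq_zero_of_le hd]; rfl, Finset.sum_empty⟩
  · refine Finset.exists_card_eq_sum_eq_zero_of_odd ?_ ?_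
    · exact Nat.Even.sub_odd Nat.one_le_two_pow ((Nat.even_pow' (by omega)).2 even_two) odd_one
    · simp only [Fintype.card_fun, ZMod.card, Fintype.card_fin]
      exact (Nat.sub_le _ _).trans (Nat.pow_le_pow_right two_pos (Nat.sub_le d 1))

theorem stmt_17_general (d : ℕ) :
    ∃ (α : Type) (M : Matroid α) (ψ : α → (Fin d → ZMod 2)) (B : Set α),
      M.IsBase B ∧
      (∃ Bstar, M.IsBase Bstar ∧ (∑ᶠ e ∈ Bstar, ψ e) = 0) ∧
      (∀ Bstar, M.IsBase Bstar → (∑ᶠ e ∈ Bstar, ψ e) = 0 →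
        2 ^ (d - 1) - 1 ≤ (B \ Bstar).ncard) := by
  obtain ⟨B₀, hB₀card, hB₀sum⟩ := exists_card_eq_two_pow_pred_sub_one_sum_eq_zero d
  rw [← Set.ncard_coe_finset] at hB₀card
  rw [← finsum_mem_coe_finset] at hB₀sum
  have hr : (2 ^ (d - 1) - 1) + (2 ^ (d - 1) - 1) < Nat.card (Fin d → ZMod 2) := by
    rw [Nat.card_fun, Nat.card_zmod, Nat.card_eq_fintype_card, Fintype.card_fin]
    cases d with
    | zero => decide
    | succ d => rw [Nat.add_sub_cancel, pow_succ]; have := d.one_le_two_pow; omega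
  obtain ⟨M, hM⟩ := Matroid.exists_isBase_iff_finsum_ne_zero_or_eq hB₀card
  obtain ⟨B, hB, hBB₀⟩ := Matroid.exists_isBase_disjoint hM hB₀card hr
  refine ⟨_, M, id, B, hB, ⟨B₀, (hM B₀).2 ⟨hB₀card, Or.inr rfl⟩, hB₀sum⟩,
    fun Bstar hBstar hsum ↦ ?_⟩
  obtain rfl : Bstar = B₀ := ((hM Bstar).1 hBstar).2.resolve_left (not_not.2 hsum)
  rw [hBB₀.sdiff_eq_left, ((hM B).1 hB).1]

/-- For every `d ≥ 1` there exist a matroid `M`, a labeling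
`ψ : E(M) → (ℤ₂)^d` and a basis `B` such that `M` has a zero basis, but every zero basis
`B*` satisfies `|B \ B*| ≥ 2^{d-1} - 1`. -/
theorem stmt_17 (d : ℕ) (hd : 1 ≤ d) :
    ∃ (α : Type) (M : Matroid α) (ψ : α → (Fin d → ZMod 2)) (B : Set α),
      M.IsBase B ∧
      (∃ Bstar, M.IsBase Bstar ∧ (∑ᶠ e ∈ Bstar, ψ e) = 0) ∧
      (∀ Bstar, M.IsBase Bstar → (∑ᶠ e ∈ Bstar, ψ e) = 0 →
        2 ^ (d - 1) - 1 ≤ (B \ Bstar).ncard) :=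
  stmt_17_general d
end

section
/- Let r ≥ 4 be an even integer and let M be the binary matroid represented by the r × 2r matrix [I_r | J_r - I_r] over GF(2), where I_r is the identity and J_r the all-ones matrix. Let B₁ be the set of columns of I_r and B₂ the set of columns of J_r - I_r. Then B₁ and B₂ are bases of M, but there do not exist 3-element subsets X ⊆ B₁, Y ⊆ B₂ and a bijection φ: X → Y such that (B₁ \ Z) ∪ φ(Z) is a basis of M for every Z ⊆ X. -/
/-- The matrix `[I_r | J_r - I_r]` over `GF(2)`, with columns indexed by `Fin r ⊕ Fin r`. -/
def spikeMatrix (r : ℕ) : Matrix (Fin r) (Fin r ⊕ Fin r) (ZMod 2) :=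
  Matrix.of fun i j =>
    Sum.elim (fun j' => if i = j' then 1 else 0) (fun j' => if i = j' then 0 else 1) j

/-- A set of columns is a basis of the column matroid of `[I_r | J_r - I_r]`:
it has `r` elements and the corresponding columns are linearly independent. -/
def spikeIsBasis (r : ℕ) (S : Finset (Fin r ⊕ Fin r)) : Prop :=
  S.card = r ∧
    LinearIndependent (ZMod 2) (fun j : S => Matrix.transpose (spikeMatrix r) (j : Fin r ⊕ Fin r))

/-!
Write `e i` and `f i = 𝟙 - e i` for the columns of `I_r` and `J_r - I_r`, so that over `GF(2)`
`e i + f i = 𝟙` and `∑ i, e i = 𝟙`, and put `ψ = swap ∘ φ`, which maps `X` into `B₁`.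
Exchanging a set `Z ⊆ B₁` of odd size for its own partners `f` gives columns summing to `0`;
so `ψ` has no fixed point, and `ψ` cannot permute `X`. Exchanging a pair `{x, y}` with
`ψ x, ψ y ∉ {x, y}` gives a set containing `e a, e b, f a, f b`, which also sum to `0`; so
`ψ x = y` or `ψ y = x` for every pair. For `|X| = 3` and `ψ` injective this forces `ψ` to
permute `X`, a contradiction.
-/

open Finset Matrix

theorem LinearIndepOn.sum_ne_zero_of_subset {ι R M : Type*} [Ring R] [Nontrivial R]
    [AddCommGroup M] [Module R M] {v : ι → M} {s : Set ι} (hv : LinearIndepOn R v s)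
    {E : Finset ι} (hEs : ↑E ⊆ s) (hE : E.Nonempty) : ∑ i ∈ E, v i ≠ 0 := by
  intro hsum
  obtain ⟨i, hi⟩ := hE
  have := linearIndepOn_finset_iff.mp (hv.mono hEs) 1 (by simpa using hsum) i hi
  exact one_ne_zero this

theorem linearIndependent_one_sub_single {ι R : Type*} [Fintype ι] [DecidableEq ι]
    [CommRing R] (h : IsUnit ((Fintype.card ι : R) - 1)) :
    LinearIndependent R fun i : ι => (1 : ι → R) - Pi.single i 1 := by
  rw [Fintype.linearIndependent_iff]
  intro g hg
  have hcoord : ∀ k, g k = ∑ i, g i := by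
    intro k
    have := congrFun hg k
    simp only [Finset.sum_apply, Pi.smul_apply, Pi.sub_apply, Pi.one_apply, smul_eq_mul, mul_sub,
      mul_one, sum_sub_distrib, Pi.single_apply, mul_ite, mul_zero, sum_ite_eq, mem_univ,
      if_true, Pi.zero_apply] at this
    linear_combination -this
  have hsum : ((Fintype.card ι : R) - 1) * ∑ i, g i = 0 := by
    have htotal : ∑ i, g i = ∑ _i : ι, ∑ j, g j := sum_congr rfl fun k _ => hcoord k
    rw [sum_const, card_univ, nsmul_eq_mul] at htotal
    linear_combination -htotal
  intro k
  rw [hcoord k, ← h.mul_right_eq_zero, hsum]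

theorem Finset.image_eq_self_of_card_eq_three {α : Type*} [DecidableEq α] {X : Finset α}
    {ψ : α → α} (hX : X.card = 3) (hψ : Set.InjOn ψ X)
    (h : ∀ x ∈ X, ∀ y ∈ X, x ≠ y → ψ x = y ∨ ψ y = x) : X.image ψ = X := by
  refine eq_of_subset_of_card_le ?_ (card_image_of_injOn hψ).ge
  simp only [image_subset_iff]
  intro x hx
  obtain ⟨y, z, hyz, hothers⟩ := card_eq_two.mp
    (by rw [card_erase_of_mem hx, hX] : (X.erase x).card = 2)
  have hy : y ∈ X.erase x := by simp [hothers]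
  have hz : z ∈ X.erase x := by simp [hothers]
  rcases h x hx y (mem_of_mem_erase hy) (ne_of_mem_erase hy).symm with hxy | hyx
  · exact hxy ▸ mem_of_mem_erase hy
  rcases h x hx z (mem_of_mem_erase hz) (ne_of_mem_erase hz).symm with hxz | hzx
  · exact hxz ▸ mem_of_mem_erase hz
  exact absurd (hψ (mem_of_mem_erase hy) (mem_of_mem_erase hz) (hyx.trans hzx.symm)) hyz

def spikeColumn (r : ℕ) (j : Fin r ⊕ Fin r) : Fin r → ZMod 2 := fun i => spikeMatrix r i j

section Spike

variable {r : ℕ}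

local notation "B₁" => Finset.map (Function.Embedding.mk Sum.inl Sum.inl_injective) univ
local notation "B₂" => Finset.map (Function.Embedding.mk Sum.inr Sum.inr_injective) univ

theorem spikeIsBasis_iff (S : Finset (Fin r ⊕ Fin r)) :
    spikeIsBasis r S ↔ S.card = r ∧ LinearIndepOn (ZMod 2) (spikeColumn r) ↑S :=
  Iff.rfl

theorem spikeColumn_inl (x : Fin r) : spikeColumn r (.inl x) = Pi.single x 1 := by
  ext i
  simp [spikeColumn, spikeMatrix, Pi.single_apply]

theorem spikeColumn_inr (x : Fin r) : spikeColumn r (.inr x) = 1 - Pi.single x 1 := by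
  ext i
  by_cases h : i = x <;> simp [spikeColumn, spikeMatrix, h]

theorem spikeColumn_add_swap (j : Fin r ⊕ Fin r) :
    spikeColumn r j + spikeColumn r j.swap = 1 := by
  rcases j with x | x <;> simp [spikeColumn_inl, spikeColumn_inr]

theorem sum_spikeColumn_inl : ∑ j ∈ B₁, spikeColumn r j = 1 := by
  ext i
  simp [sum_map, spikeColumn_inl, Finset.sum_apply, Pi.single_apply]

theorem spikeIsBasis_map_iff (f : Fin r ↪ Fin r ⊕ Fin r) :
    spikeIsBasis r (univ.map f) ↔ LinearIndependent (ZMod 2) (spikeColumn r ∘ f) := by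
  rw [spikeIsBasis_iff, card_map, card_univ, Fintype.card_fin, coe_map, coe_univ,
    Set.image_univ, linearIndepOn_range_iff f.injective, eq_self, true_and]

theorem spikeIsBasis_inl : spikeIsBasis r B₁ := by
  rw [spikeIsBasis_map_iff]
  convert (Pi.basisFun (ZMod 2) (Fin r)).linearIndependent
  funext x
  simp [spikeColumn_inl]

theorem spikeIsBasis_inr (hr : Even r) : spikeIsBasis r B₂ := by
  have hunit : IsUnit ((Fintype.card (Fin r) : ZMod 2) - 1) := by
    rw [Fintype.card_fin, hr.natCast_zmod_two, zero_sub]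
    exact isUnit_one.neg
  rw [spikeIsBasis_map_iff]
  show LinearIndependent _ fun x => spikeColumn r (.inr x)
  simpa only [spikeColumn_inr] using linearIndependent_one_sub_single hunit

theorem not_spikeIsBasis_of_sum_eq_zero {S E : Finset (Fin r ⊕ Fin r)} (hES : E ⊆ S)
    (hE : E.Nonempty) (hsum : ∑ j ∈ E, spikeColumn r j = 0) : ¬ spikeIsBasis r S :=
  fun hS => ((spikeIsBasis_iff S).1 hS).2.sum_ne_zero_of_subset (mod_cast hES) hE hsum

theorem disjoint_image_swap {U W : Finset (Fin r ⊕ Fin r)} (hU : U ⊆ B₁) (hW : W ⊆ B₁) :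
    Disjoint U (W.image Sum.swap) := by
  rw [disjoint_left]
  intro j hjU hjW
  obtain ⟨w, hw, rfl⟩ := mem_image.1 hjW
  obtain ⟨x, -, rfl⟩ := mem_map.1 (hW hw)
  obtain ⟨y, -, hy⟩ := mem_map.1 (hU hjU)
  simp at hy

theorem sum_spikeColumn_union_image_swap {W : Finset (Fin r ⊕ Fin r)}
    (hW : W ⊆ B₁) (hcard : Even W.card) :
    ∑ j ∈ W ∪ W.image Sum.swap, spikeColumn r j = 0 := by
  rw [sum_union (disjoint_image_swap hW hW), sum_image Sum.swap_leftInverse.injective.injOn,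
    ← sum_add_distrib]
  simp only [spikeColumn_add_swap, sum_const]
  rw [← Nat.cast_smul_eq_nsmul (ZMod 2), hcard.natCast_zmod_two, zero_smul]

theorem sum_spikeColumn_sdiff_union_image_swap {X : Finset (Fin r ⊕ Fin r)}
    (hX : X ⊆ B₁) (hcard : Odd X.card) :
    ∑ j ∈ (B₁ \ X) ∪ X.image Sum.swap, spikeColumn r j = 0 := by
  have hrest : ∑ j ∈ B₁ \ X, spikeColumn r j + ∑ j ∈ X, spikeColumn r j = 1 := by
    rw [sum_sdiff hX, sum_spikeColumn_inl]
  have hswap : ∑ j ∈ X, spikeColumn r j + ∑ j ∈ X, spikeColumn r j.swap = 1 := by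
    simp only [← sum_add_distrib, spikeColumn_add_swap, sum_const]
    rw [← Nat.cast_smul_eq_nsmul (ZMod 2), hcard.natCast_zmod_two, one_smul]
  have hsame : ∑ j ∈ B₁ \ X, spikeColumn r j = ∑ j ∈ X, spikeColumn r j.swap :=
    add_right_cancel (hrest.trans ((add_comm _ _).trans hswap).symm)
  rw [sum_union (disjoint_image_swap sdiff_subset hX),
    sum_image Sum.swap_leftInverse.injective.injOn, hsame, ← two_smul (ZMod 2),
    show (2 : ZMod 2) = 0 from rfl, zero_smul]

theorem not_spikeIsBasis_sdiff_union_image_swap {X : Finset (Fin r ⊕ Fin r)}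
    (hX : X ⊆ B₁) (hcard : Odd X.card) :
    ¬ spikeIsBasis r ((B₁ \ X) ∪ X.image Sum.swap) :=
  not_spikeIsBasis_of_sum_eq_zero subset_rfl
    (((card_pos.1 hcard.pos).image _).mono subset_union_right)
    (sum_spikeColumn_sdiff_union_image_swap hX hcard)

section Exchange

variable {X : Finset (Fin r ⊕ Fin r)} {φ : Fin r ⊕ Fin r → Fin r ⊕ Fin r}

theorem swap_apply_ne_self (hX : X ⊆ B₁)
    (hbasis : ∀ Z ⊆ X, spikeIsBasis r ((B₁ \ Z) ∪ Z.image φ)) {x : Fin r ⊕ Fin r}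
    (hx : x ∈ X) : (φ x).swap ≠ x := by
  intro hfix
  have himage : ({x} : Finset _).image φ = ({x} : Finset _).image Sum.swap := by
    rw [image_singleton, image_singleton, ← Sum.swap_swap (φ x), hfix]
  exact not_spikeIsBasis_sdiff_union_image_swap (singleton_subset_iff.2 (hX hx)) (by simp)
    (himage ▸ hbasis {x} (singleton_subset_iff.2 hx))

theorem swap_apply_eq_or_swap_apply_eq (hX : X ⊆ B₁)
    (hbasis : ∀ Z ⊆ X, spikeIsBasis r ((B₁ \ Z) ∪ Z.image φ))
    (hφ : ∀ x ∈ X, φ x ∈ B₂) (hinj : Set.InjOn φ X)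
    {x y : Fin r ⊕ Fin r} (hx : x ∈ X) (hy : y ∈ X) (hxy : x ≠ y) :
    (φ x).swap = y ∨ (φ y).swap = x := by
  by_contra! hne
  have hswap_mem : ∀ z ∈ X, (φ z).swap ∈ B₁ := by
    intro z hz
    obtain ⟨t, -, ht⟩ := mem_map.1 (hφ z hz)
    simp [← ht]
  set W : Finset (Fin r ⊕ Fin r) := {(φ x).swap, (φ y).swap}
  have hWcard : W.card = 2 :=
    card_pair fun h => hxy (hinj hx hy (Sum.swap_leftInverse.injective h))
  have hW : W ⊆ B₁ \ {x, y} := by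
    simp only [W, insert_subset_iff, singleton_subset_iff, mem_sdiff, mem_insert,
      mem_singleton, not_or]
    exact ⟨⟨hswap_mem x hx, swap_apply_ne_self hX hbasis hx, hne.1⟩,
      ⟨hswap_mem y hy, hne.2, swap_apply_ne_self hX hbasis hy⟩⟩
  have hWswap : W.image Sum.swap = ({x, y} : Finset _).image φ := by
    simp [W, image_insert, Sum.swap_swap]
  exact not_spikeIsBasis_of_sum_eq_zero (union_subset_union hW hWswap.le)
    (((insert_nonempty _ _).image _).mono subset_union_right)
    (sum_spikeColumn_union_image_swap (hW.trans sdiff_subset) (hWcard ▸ even_two))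
    (hbasis {x, y} (insert_subset hx (singleton_subset_iff.2 hy)))

end Exchange

end Spike

theorem stmt_18_general (r : ℕ) (hre : Even r) :
    spikeIsBasis r (Finset.univ.map ⟨Sum.inl, Sum.inl_injective⟩) ∧
    spikeIsBasis r (Finset.univ.map ⟨Sum.inr, Sum.inr_injective⟩) ∧
    ¬ ∃ (X Y : Finset (Fin r ⊕ Fin r)) (φ : Fin r ⊕ Fin r → Fin r ⊕ Fin r),
        X ⊆ Finset.univ.map ⟨Sum.inl, Sum.inl_injective⟩ ∧
        Y ⊆ Finset.univ.map ⟨Sum.inr, Sum.inr_injective⟩ ∧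
        X.card = 3 ∧ Y.card = 3 ∧
        Set.BijOn φ (X : Set (Fin r ⊕ Fin r)) (Y : Set (Fin r ⊕ Fin r)) ∧
        ∀ Z ⊆ X, spikeIsBasis r
          (((Finset.univ.map ⟨Sum.inl, Sum.inl_injective⟩) \ Z) ∪ Z.image φ) := by
  refine ⟨spikeIsBasis_inl, spikeIsBasis_inr hre, ?_⟩
  rintro ⟨X, Y, φ, hX, hY, hXcard, -, hφ, hbasis⟩
  have hcycle : X.image (Sum.swap ∘ φ) = X :=
    X.image_eq_self_of_card_eq_three hXcard
      (Sum.swap_leftInverse.injective.comp_injOn hφ.injOn) fun x hx y hy hxy =>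
      swap_apply_eq_or_swap_apply_eq hX hbasis (fun z hz => hY (hφ.mapsTo hz)) hφ.injOn
        hx hy hxy
  have himage : X.image φ = X.image Sum.swap := by
    conv_rhs => rw [← hcycle]
    rw [image_image, ← Function.comp_assoc, Sum.swap_leftInverse.comp_eq_id, Function.id_comp]
  exact not_spikeIsBasis_sdiff_union_image_swap hX (by rw [hXcard]; decide)
    (himage ▸ hbasis X subset_rfl)

/-- For even `r ≥ 4` the column sets `B₁` of `I_r` and `B₂` of `J_r - I_r`
are bases of the binary matroid of `[I_r | J_r - I_r]`, but there are no 3-element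
subsets `X ⊆ B₁`, `Y ⊆ B₂` and bijection `φ : X → Y` such that `(B₁ \ Z) ∪ φ(Z)` is a
basis for every `Z ⊆ X`. -/
theorem stmt_18 (r : ℕ) (hr : 4 ≤ r) (hre : Even r) :
    spikeIsBasis r (Finset.univ.map ⟨Sum.inl, Sum.inl_injective⟩) ∧
    spikeIsBasis r (Finset.univ.map ⟨Sum.inr, Sum.inr_injective⟩) ∧
    ¬ ∃ (X Y : Finset (Fin r ⊕ Fin r)) (φ : Fin r ⊕ Fin r → Fin r ⊕ Fin r),
        X ⊆ Finset.univ.map ⟨Sum.inl, Sum.inl_injective⟩ ∧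
        Y ⊆ Finset.univ.map ⟨Sum.inr, Sum.inr_injective⟩ ∧
        X.card = 3 ∧ Y.card = 3 ∧
        Set.BijOn φ (X : Set (Fin r ⊕ Fin r)) (Y : Set (Fin r ⊕ Fin r)) ∧
        ∀ Z ⊆ X, spikeIsBasis r
          (((Finset.univ.map ⟨Sum.inl, Sum.inl_injective⟩) \ Z) ∪ Z.image φ) :=
  stmt_18_general r hre
end

section
/- Let D be a directed graph, ψ: A(D) → Γ a labeling of the arcs to an abelian group, and w: A(D) → ℝ a conservative weight function (no directed cycle has negative total weight). If P is a closed directed walk with ψ(P) ≠ 0, then there exists a directed cycle C in D with ψ(C) ≠ 0 and w(C) ≤ w(P). -/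
/-- A closed directed walk in the digraph on `V` with arc set `A`. -/
structure ClosedWalk {V : Type*} (A : Set (V × V)) where
  length : ℕ
  vert : ℕ → V
  pos : 0 < length
  closed : vert length = vert 0
  mem : ∀ i < length, (vert i, vert (i + 1)) ∈ A

/-- A closed walk is a directed cycle if its vertices (before returning) are distinct. -/
def ClosedWalk.IsCycle {V : Type*} {A : Set (V × V)} (W : ClosedWalk A) : Prop :=
  ∀ i < W.length, ∀ j < W.length, W.vert i = W.vert j → i = j

/-- The sum of a function on arcs along a closed walk, counted with multiplicity. -/
def ClosedWalk.arcSum {V M : Type*} [AddCommMonoid M] {A : Set (V × V)}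
    (W : ClosedWalk A) (f : V × V → M) : M :=
  ∑ i ∈ Finset.range W.length, f (W.vert i, W.vert (i + 1))

namespace ClosedWalk

variable {V : Type*} {A : Set (V × V)}

/-- First piece of a split at a repeated vertex: the part from `i` to `j`. -/
def part1 (W : ClosedWalk A) (i j : ℕ) (hij : i < j) (hj : j < W.length)
    (hv : W.vert i = W.vert j) : ClosedWalk A where
  length := j - i
  vert := fun k => W.vert (i + k)
  pos := by omega
  closed := by
    show W.vert (i + (j - i)) = W.vert (i + 0)
    have h1 : i + (j - i) = j := by omega
    rw [h1, Nat.add_zero]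
    exact hv.symm
  mem := fun k hk => by
    show (W.vert (i + k), W.vert (i + (k + 1))) ∈ A
    have h1 : i + k < W.length := by omega
    have := W.mem (i + k) h1
    have h2 : i + (k + 1) = i + k + 1 := by omega
    rw [h2]
    exact this

/-- Second piece: the part `0..i` followed by `j..length`. -/
def part2 (W : ClosedWalk A) (i j : ℕ) (hij : i < j) (hj : j < W.length)
    (hv : W.vert i = W.vert j) : ClosedWalk A where
  length := W.length - (j - i)
  vert := fun k => if k ≤ i then W.vert k else W.vert (k + (j - i))
  pos := by omega
  closed := by
    show (if W.length - (j - i) ≤ i then _ else _) = (if 0 ≤ i then _ else _)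
    have h1 : ¬ (W.length - (j - i) ≤ i) := by omega
    have h2 : W.length - (j - i) + (j - i) = W.length := by omega
    rw [if_neg h1, if_pos (Nat.zero_le i), h2, W.closed]
  mem := fun k hk => by
    show ((if k ≤ i then W.vert k else W.vert (k + (j - i))),
      (if k + 1 ≤ i then W.vert (k + 1) else W.vert (k + 1 + (j - i)))) ∈ A
    by_cases h1 : k + 1 ≤ i
    · rw [if_pos (by omega : k ≤ i), if_pos h1]
      exact W.mem k (by omega)
    · by_cases h2 : k ≤ i
      · have hk' : k = i := by omega
        rw [if_pos h2, if_neg h1, hk', hv]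
        have h3 : i + 1 + (j - i) = j + 1 := by omega
        rw [h3]
        exact W.mem j hj
      · rw [if_neg h2, if_neg h1]
        have h3 : k + 1 + (j - i) = k + (j - i) + 1 := by omega
        rw [h3]
        exact W.mem (k + (j - i)) (by omega)

lemma arcSum_split {M : Type*} [AddCommMonoid M] (W : ClosedWalk A) (i j : ℕ)
    (hij : i < j) (hj : j < W.length) (hv : W.vert i = W.vert j) (f : V × V → M) :
    W.arcSum f = (W.part1 i j hij hj hv).arcSum f + (W.part2 i j hij hj hv).arcSum f := by
  unfold arcSum part1 part2
  simp only
  have h1 : ∑ k ∈ Finset.range (j - i),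
      f (W.vert (i + k), W.vert (i + (k + 1))) =
      ∑ k ∈ Finset.Ico i j, f (W.vert k, W.vert (k + 1)) := by
    rw [Finset.sum_Ico_eq_sum_range]
    apply Finset.sum_congr rfl
    intro k hk
    congr 2 <;> omega
  have hvert : ∀ k, i ≤ k →
      (if k ≤ i then W.vert k else W.vert (k + (j - i))) = W.vert (k + (j - i)) := by
    intro k hk
    by_cases h : k ≤ i
    · have hki : k = i := by omega
      rw [if_pos h, hki, hv]
      congr 1
      omega
    · rw [if_neg h]
  have h2 : ∑ k ∈ Finset.range (W.length - (j - i)),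
      f ((if k ≤ i then W.vert k else W.vert (k + (j - i))),
         (if k + 1 ≤ i then W.vert (k + 1) else W.vert (k + 1 + (j - i)))) =
      (∑ k ∈ Finset.Ico 0 i, f (W.vert k, W.vert (k + 1))) +
      ∑ k ∈ Finset.Ico j W.length, f (W.vert k, W.vert (k + 1)) := by
    rw [Finset.range_eq_Ico,
      ← Finset.sum_Ico_consecutive (m := 0) (n := i) (k := W.length - (j - i)) _
        (Nat.zero_le i) (by omega)]
    congr 1
    · apply Finset.sum_congr rfl
      intro k hk
      simp only [Finset.mem_Ico] at hk
      rw [if_pos (by omega : k ≤ i), if_pos (by omega : k + 1 ≤ i)]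
    · have h3 : ∀ k ∈ Finset.Ico i (W.length - (j - i)),
        f ((if k ≤ i then W.vert k else W.vert (k + (j - i))),
           (if k + 1 ≤ i then W.vert (k + 1) else W.vert (k + 1 + (j - i)))) =
        f (W.vert (k + (j - i)), W.vert (k + (j - i) + 1)) := by
        intro k hk
        simp only [Finset.mem_Ico] at hk
        rw [hvert k hk.1, if_neg (by omega : ¬ k + 1 ≤ i),
          show k + 1 + (j - i) = k + (j - i) + 1 by omega]
      rw [Finset.sum_congr rfl h3, Finset.sum_Ico_eq_sum_range,
        Finset.sum_Ico_eq_sum_range]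
      apply Finset.sum_congr (by congr 1; omega)
      intro k hk
      simp only [Finset.mem_range] at hk
      rw [show i + k + (j - i) = j + k by omega]
  rw [h1, h2, Finset.range_eq_Ico,
    ← Finset.sum_Ico_consecutive (m := 0) (n := j) (k := W.length) _ (by omega) (by omega),
    ← Finset.sum_Ico_consecutive (m := 0) (n := i) (k := j) _ (by omega) (by omega)]
  abel

/-- Every closed walk has nonnegative weight when `w` is conservative. -/
lemma walk_nonneg (w : V × V → ℝ)
    (hcons : ∀ C : ClosedWalk A, C.IsCycle → 0 ≤ C.arcSum w) :
    ∀ n (W : ClosedWalk A), W.length = n → 0 ≤ W.arcSum w := by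
  intro n
  induction n using Nat.strong_induction_on with
  | _ n ih =>
    intro W hWn
    by_cases hc : W.IsCycle
    · exact hcons W hc
    · unfold IsCycle at hc
      push_neg at hc
      obtain ⟨a, ha, b, hb, hab, hne⟩ := hc
      obtain ⟨i, j, hij, hj, hv⟩ : ∃ i j, i < j ∧ j < W.length ∧ W.vert i = W.vert j := by
        rcases Nat.lt_or_ge a b with h | h
        · exact ⟨a, b, h, hb, hab⟩
        · exact ⟨b, a, by omega, ha, hab.symm⟩
      rw [W.arcSum_split i j hij hj hv]
      have l1 := ih (j - i) (by omega) (W.part1 i j hij hj hv) rfl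
      have l2 := ih (W.length - (j - i)) (by omega) (W.part2 i j hij hj hv) rfl
      linarith

end ClosedWalk

/-- If `w` is conservative (every directed cycle has nonnegative weight)
and `P` is a closed walk with non-zero label, then there is a directed cycle `C` with
non-zero label and `w(C) ≤ w(P)`. -/
theorem stmt_19 {V Γ : Type*} [AddCommGroup Γ] (A : Set (V × V))
    (ψ : V × V → Γ) (w : V × V → ℝ)
    (hcons : ∀ C : ClosedWalk A, C.IsCycle → 0 ≤ C.arcSum w)
    (P : ClosedWalk A) (hP : P.arcSum ψ ≠ 0) :
    ∃ C : ClosedWalk A, C.IsCycle ∧ C.arcSum ψ ≠ 0 ∧ C.arcSum w ≤ P.arcSum w := by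
  have key : ∀ n (W : ClosedWalk A), W.length = n → W.arcSum ψ ≠ 0 →
      ∃ C : ClosedWalk A, C.IsCycle ∧ C.arcSum ψ ≠ 0 ∧ C.arcSum w ≤ W.arcSum w := by
    intro n
    induction n using Nat.strong_induction_on with
    | _ n ih =>
      intro W hWn hWψ
      by_cases hc : W.IsCycle
      · exact ⟨W, hc, hWψ, le_refl _⟩
      · unfold ClosedWalk.IsCycle at hc
        push_neg at hc
        obtain ⟨a, ha, b, hb, hab, hne⟩ := hc
        obtain ⟨i, j, hij, hj, hv⟩ : ∃ i j, i < j ∧ j < W.length ∧ W.vert i = W.vert j := by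
          rcases Nat.lt_or_ge a b with h | h
          · exact ⟨a, b, h, hb, hab⟩
          · exact ⟨b, a, by omega, ha, hab.symm⟩
        have hψ := W.arcSum_split i j hij hj hv ψ
        have hw := W.arcSum_split i j hij hj hv w
        set W1 := W.part1 i j hij hj hv with hW1
        set W2 := W.part2 i j hij hj hv with hW2
        have hn1 : W1.length = j - i := rfl
        have hn2 : W2.length = W.length - (j - i) := rfl
        have hnn1 := ClosedWalk.walk_nonneg w hcons W1.length W1 rfl
        have hnn2 := ClosedWalk.walk_nonneg w hcons W2.length W2 rfl
        by_cases h1 : W1.arcSum ψ ≠ 0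
        · obtain ⟨C, hC1, hC2, hC3⟩ := ih W1.length (by rw [hn1]; omega) W1 rfl h1
          exact ⟨C, hC1, hC2, by linarith⟩
        · push_neg at h1
          have h2 : W2.arcSum ψ ≠ 0 := by
            intro h2
            rw [hψ, h1, h2, add_zero] at hWψ
            exact hWψ rfl
          obtain ⟨C, hC1, hC2, hC3⟩ := ih W2.length (by rw [hn2]; omega) W2 rfl h2
          exact ⟨C, hC1, hC2, by linarith⟩
  exact key P.length P rfl hP
end
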